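/- arXiv:2512.12275 — 4 statements merged into one kernel-verified Lean document; each statement's English description precedes it below -/
import Mathlib

section
/- Let n ≥ 2 and π ∈ S_n. Then as(π) = run(π) if π_1 < π_2, and as(π) = run(π) + 1 if π_1 > π_2. -/
open Finset Polynomial

/-- The word `π_1 π_2 ⋯ π_n` of a permutation of `[n] = {1,…,n}`, as a function `ℕ → ℤ`,
with the convention that positions outside `{1,…,n}` (in particular position `0`) get value `0`. -/
def permWord (n : ℕ) (σ : Equiv.Perm (Fin n)) : ℕ → ℤ := fun i =>
  if h : 1 ≤ i ∧ i ≤ n then ((σ ⟨i - 1, by omega⟩ : ℕ) : ℤ) + 1 else 0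

/-- A word changes direction at index `i`. -/
def changesDir (w : ℕ → ℤ) (i : ℕ) : Prop :=
  (w (i - 1) < w i ∧ w (i + 1) < w i) ∨ (w i < w (i - 1) ∧ w i < w (i + 1))

instance (w : ℕ → ℤ) : DecidablePred (changesDir w) := fun i => by
  unfold changesDir; infer_instance

/-- The number of alternating runs of a permutation of `[n]`:
one plus the number of indices `i ∈ {2,…,n-1}` where the word changes direction. -/
def runA (n : ℕ) (σ : Equiv.Perm (Fin n)) : ℕ :=
  1 + ((Finset.Icc 2 (n - 1)).filter (changesDir (permWord n σ))).card

/-- The run polynomial `R_n(x) = ∑_{σ ∈ S_n} x^{run σ}`. -/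
noncomputable def runPoly (n : ℕ) : Polynomial ℤ :=
  ∑ σ : Equiv.Perm (Fin n), X ^ runA n σ

/-- `altChain w b l` holds if the values of `w` along the index list `l` alternate,
starting with a strict descent if `b = true` (resp. ascent if `b = false`). -/
def altChain (w : ℕ → ℤ) : Bool → List ℕ → Prop
  | _, [] => True
  | _, [_] => True
  | b, i :: j :: rest => (if b then w j < w i else w i < w j) ∧ altChain w (!b) (j :: rest)

/-- `las n σ` : the maximum length of an alternating subsequence
`σ_{i₁} > σ_{i₂} < σ_{i₃} > ⋯` (indices strictly increasing) of `σ`. -/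
noncomputable def las (n : ℕ) (σ : Equiv.Perm (Fin n)) : ℕ :=
  sSup {k | ∃ l : List ℕ, l.length = k ∧ l.Chain' (· < ·) ∧
    (∀ i ∈ l, 1 ≤ i ∧ i ≤ n) ∧ altChain (permWord n σ) true l}

/-- The set of peaks of a permutation: indices `i ∈ {2,…,n-1}` with `σ_{i-1} < σ_i > σ_{i+1}`. -/
def peakSet (n : ℕ) (σ : Equiv.Perm (Fin n)) : Finset ℕ :=
  (Finset.Icc 2 (n - 1)).filter fun i =>
    permWord n σ (i - 1) < permWord n σ i ∧ permWord n σ (i + 1) < permWord n σ i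

/-- The set of valleys of a permutation: indices `i ∈ {2,…,n-1}` with `σ_{i-1} > σ_i < σ_{i+1}`. -/
def valleySet (n : ℕ) (σ : Equiv.Perm (Fin n)) : Finset ℕ :=
  (Finset.Icc 2 (n - 1)).filter fun i =>
    permWord n σ i < permWord n σ (i - 1) ∧ permWord n σ i < permWord n σ (i + 1)

/-- The set of left peaks of a permutation: indices `i ∈ {1,…,n-1}` with
`σ_{i-1} < σ_i > σ_{i+1}`, with the convention `σ_0 = 0`. -/
def leftPeakSet (n : ℕ) (σ : Equiv.Perm (Fin n)) : Finset ℕ :=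
  (Finset.Icc 1 (n - 1)).filter fun i =>
    permWord n σ (i - 1) < permWord n σ i ∧ permWord n σ (i + 1) < permWord n σ i

/-- The number of descents of a permutation of `[n]`. -/
def desA (n : ℕ) (σ : Equiv.Perm (Fin n)) : ℕ :=
  ((Finset.Icc 1 (n - 1)).filter fun i => permWord n σ (i + 1) < permWord n σ i).card

/-- The maximum letter (as a natural number, `0` for the empty word) of `w₂`, the longest
suffix of `w_1 ⋯ w_{i-1}` all of whose letters exceed `w i`. -/
def w2Max (w : ℕ → ℤ) (i : ℕ) : ℕ :=
  ((Finset.Ico 1 i).filter fun j => ∀ t ∈ Finset.Ico j i, w i < w t).sup fun j => (w j).toNat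

/-- The maximum letter (as a natural number, `0` for the empty word) of `w₄`, the longest
prefix of `w_{i+1} ⋯ w_n` all of whose letters exceed `w i`. -/
def w4Max (n : ℕ) (w : ℕ → ℤ) (i : ℕ) : ℕ :=
  ((Finset.Ioc i n).filter fun j => ∀ t ∈ Finset.Ioc i j, w i < w t).sup fun j => (w j).toNat

/-- André permutation of `[n]`: no double descent, no final descent, and for every
`i ∈ {2,…,n-1}`, in the `π_i`-factorization the maximum letter of `w₂` is smaller than the
maximum letter of `w₄` (maximum of the empty word being `0`). -/
def IsAndre (n : ℕ) (σ : Equiv.Perm (Fin n)) : Prop :=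
  (∀ i ∈ Finset.Icc 2 (n - 1),
      ¬(permWord n σ i < permWord n σ (i - 1) ∧ permWord n σ (i + 1) < permWord n σ i)) ∧
  permWord n σ (n - 1) < permWord n σ n ∧
  ∀ i ∈ Finset.Icc 2 (n - 1), w2Max (permWord n σ) i < w4Max n (permWord n σ) i

/-- `d_{n,i}` : the number of André permutations of `[n]` with exactly `i` descents. -/
noncomputable def andreCount (n i : ℕ) : ℕ :=
  Nat.card {σ : Equiv.Perm (Fin n) // IsAndre n σ ∧ desA n σ = i}

/-- A signed permutation of length `n`: a permutation of `[n]` together with a sign for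
each position. -/
abbrev SignedPerm (n : ℕ) := Equiv.Perm (Fin n) × (Fin n → Bool)

/-- The word `π_1 π_2 ⋯ π_n` of a signed permutation, as a function `ℕ → ℤ`, with the
convention that positions outside `{1,…,n}` (in particular position `0`) get value `0`. -/
def signedWord (n : ℕ) (π : SignedPerm n) : ℕ → ℤ := fun i =>
  if h : 1 ≤ i ∧ i ≤ n then
    (if π.2 ⟨i - 1, by omega⟩ then -(((π.1 ⟨i - 1, by omega⟩ : ℕ) : ℤ) + 1)
      else ((π.1 ⟨i - 1, by omega⟩ : ℕ) : ℤ) + 1)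
  else 0

/-- `run_B` : one plus the number of indices `i ∈ {1,…,n-1}` where the word
`0 π_1 ⋯ π_n` changes direction. -/
def runB (n : ℕ) (π : SignedPerm n) : ℕ :=
  1 + ((Finset.Icc 1 (n - 1)).filter (changesDir (signedWord n π))).card

/-- `des_B` : the number of indices `i ∈ {0,…,n-1}` with `π_i > π_{i+1}`, where `π_0 = 0`. -/
def desB (n : ℕ) (π : SignedPerm n) : ℕ :=
  ((Finset.range n).filter fun i => signedWord n π (i + 1) < signedWord n π i).card

/-- The set of valleys of a signed permutation: indices `i ∈ {1,…,n-1}` with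
`π_{i-1} > π_i < π_{i+1}`, with the convention `π_0 = 0`. -/
def valleysB (n : ℕ) (π : SignedPerm n) : Finset ℕ :=
  (Finset.Icc 1 (n - 1)).filter fun i =>
    signedWord n π i < signedWord n π (i - 1) ∧ signedWord n π i < signedWord n π (i + 1)

/-- The maximum letter of `w₂` (as an element of `WithBot ℤ`, empty word giving `⊥ = -∞`). -/
def w2MaxB (w : ℕ → ℤ) (i : ℕ) : WithBot ℤ :=
  ((Finset.Ico 1 i).filter fun j => ∀ t ∈ Finset.Ico j i, w i < w t).sup fun j =>
    (w j : WithBot ℤ)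

/-- The maximum letter of `w₄` (as an element of `WithBot ℤ`, empty word giving `⊥ = -∞`). -/
def w4MaxB (n : ℕ) (w : ℕ → ℤ) (i : ℕ) : WithBot ℤ :=
  ((Finset.Ioc i n).filter fun j => ∀ t ∈ Finset.Ioc i j, w i < w t).sup fun j =>
    (w j : WithBot ℤ)

/-- Type B André permutation: no double descent, no final descent, and for every valley `i`,
in the `π_i`-factorization the maximum letter of `w₂` is smaller than the maximum letter of
`w₄` (maximum of the empty word being `-∞`). -/
def IsAndreB (n : ℕ) (π : SignedPerm n) : Prop :=
  (∀ i ∈ Finset.Icc 1 (n - 1),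
      ¬(signedWord n π i < signedWord n π (i - 1) ∧ signedWord n π (i + 1) < signedWord n π i)) ∧
  signedWord n π (n - 1) < signedWord n π n ∧
  ∀ i ∈ valleysB n π, w2MaxB (signedWord n π) i < w4MaxB n (signedWord n π) i

/-- The number of negative letters of a signed permutation. -/
def negCount (n : ℕ) (π : SignedPerm n) : ℕ :=
  (Finset.univ.filter fun i => π.2 i = true).card

/-- `R_n^{B,>}(x)`. -/
noncomputable def runPolyBgt (n : ℕ) : Polynomial ℤ :=
  ∑ π : SignedPerm n, if 0 < signedWord n π 1 then X ^ runB n π else 0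

/-- `R_n^{B,<}(x)`. -/
noncomputable def runPolyBlt (n : ℕ) : Polynomial ℤ :=
  ∑ π : SignedPerm n, if signedWord n π 1 < 0 then X ^ runB n π else 0

/-- `R_n^{B}(x)`. -/
noncomputable def runPolyB (n : ℕ) : Polynomial ℤ :=
  ∑ π : SignedPerm n, X ^ runB n π

/-- `R_n^{D,>}(x)`. -/
noncomputable def runPolyDgt (n : ℕ) : Polynomial ℤ :=
  ∑ π : SignedPerm n, if Even (negCount n π) ∧ 0 < signedWord n π 1 then X ^ runB n π else 0

/-- `R_n^{D,<}(x)`. -/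
noncomputable def runPolyDlt (n : ℕ) : Polynomial ℤ :=
  ∑ π : SignedPerm n, if Even (negCount n π) ∧ signedWord n π 1 < 0 then X ^ runB n π else 0

/-- `R_n^{D}(x)`. -/
noncomputable def runPolyD (n : ℕ) : Polynomial ℤ :=
  ∑ π : SignedPerm n, if Even (negCount n π) then X ^ runB n π else 0

/-- The Eulerian polynomial `A_n(x) = ∑_{σ ∈ S_n} x^{des(σ)+1}`. -/
noncomputable def eulerianA (n : ℕ) : Polynomial ℤ :=
  ∑ σ : Equiv.Perm (Fin n), X ^ (desA n σ + 1)

/-- The type B Eulerian polynomial `B_n(x) = ∑_{π ∈ 𝔅_n} x^{des_B(π)}`. -/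
noncomputable def eulerianB (n : ℕ) : Polynomial ℤ :=
  ∑ π : SignedPerm n, X ^ desB n π

/-- `b̄_{n,k}` : the number of type B André permutations of length `n` with `des_B` equal
to `k`. -/
noncomputable def andreBCountDes (n k : ℕ) : ℕ :=
  Nat.card {π : SignedPerm n // IsAndreB n π ∧ desB n π = k}

/-- `b̂_{n,j}` : the number of type B André permutations of length `n` with exactly `j`
valleys. -/
noncomputable def andreBCountVal (n j : ℕ) : ℕ :=
  Nat.card {π : SignedPerm n // IsAndreB n π ∧ (valleysB n π).card = j}

/-- `d̃_{n,k}` : the number of type D André permutations of length `n` (type B André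
permutations with an even number of negative letters) with exactly `k` valleys. -/
noncomputable def andreDCountVal (n k : ℕ) : ℕ :=
  Nat.card {π : SignedPerm n //
    IsAndreB n π ∧ Even (negCount n π) ∧ (valleysB n π).card = k}

/-- The number of permutations of `[n]` with exactly `j` left peaks. -/
noncomputable def leftPeakCount (n j : ℕ) : ℕ :=
  Nat.card {σ : Equiv.Perm (Fin n) // (leftPeakSet n σ).card = j}

/-- `R_n` evaluated at a real number. -/
noncomputable def runPolyReal (n : ℕ) (x : ℝ) : ℝ :=
  ∑ σ : Equiv.Perm (Fin n), x ^ runA n σ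

/-- `A_n` evaluated at a real number. -/
noncomputable def eulerianAReal (n : ℕ) (x : ℝ) : ℝ :=
  ∑ σ : Equiv.Perm (Fin n), x ^ (desA n σ + 1)

/-- `R_n^{B,>}` evaluated at a real number. -/
noncomputable def runPolyBgtReal (n : ℕ) (x : ℝ) : ℝ :=
  ∑ π : SignedPerm n, if 0 < signedWord n π 1 then x ^ runB n π else 0

/-- `B_n` evaluated at a real number. -/
noncomputable def eulerianBReal (n : ℕ) (x : ℝ) : ℝ :=
  ∑ π : SignedPerm n, x ^ desB n π

namespace Stmt1Aux

lemma mono_le (w : ℕ → ℤ) : ∀ b a, a ≤ b → (∀ p, a ≤ p → p < b → w p ≤ w (p+1)) → w a ≤ w b := by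
  intro b
  induction b with
  | zero =>
    intro a h _
    have : a = 0 := by omega
    subst this; exact le_rfl
  | succ b ih =>
    intro a h hstep
    rcases Nat.lt_or_ge a (b+1) with h' | h'
    · have h1 : a ≤ b := by omega
      have ha := ih a h1 (fun p hp1 hp2 => hstep p hp1 (by omega))
      have hb := hstep b (by omega) (by omega)
      linarith
    · have : a = b + 1 := by omega
      subst this; exact le_rfl

lemma mono_ge (w : ℕ → ℤ) : ∀ b a, a ≤ b → (∀ p, a ≤ p → p < b → w (p+1) ≤ w p) → w b ≤ w a := by
  intro b
  induction b with
  | zero =>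
    intro a h _
    have : a = 0 := by omega
    subst this; exact le_rfl
  | succ b ih =>
    intro a h hstep
    rcases Nat.lt_or_ge a (b+1) with h' | h'
    · have h1 : a ≤ b := by omega
      have ha := ih a h1 (fun p hp1 hp2 => hstep p hp1 (by omega))
      have hb := hstep b (by omega) (by omega)
      linarith
    · have : a = b + 1 := by omega
      subst this; exact le_rfl

lemma strict_desc (w : ℕ → ℤ) : ∀ b a, a < b → (∀ p, a ≤ p → p < b → w (p+1) < w p) → w b < w a := by
  intro b
  induction b with
  | zero => intro a h _; exact absurd h (Nat.not_lt_zero a)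
  | succ b ih =>
    intro a h hstep
    rcases Nat.lt_or_ge a b with h' | h'
    · have h1 := ih a h' (fun p hp1 hp2 => hstep p hp1 (by omega))
      have h2 := hstep b (by omega) (by omega)
      linarith
    · have : a = b := by omega
      subst this
      exact hstep a le_rfl (by omega)

lemma strict_asc (w : ℕ → ℤ) : ∀ b a, a < b → (∀ p, a ≤ p → p < b → w p < w (p+1)) → w a < w b := by
  intro b
  induction b with
  | zero => intro a h _; exact absurd h (Nat.not_lt_zero a)
  | succ b ih =>
    intro a h hstep
    rcases Nat.lt_or_ge a b with h' | h'
    · have h1 := ih a h' (fun p hp1 hp2 => hstep p hp1 (by omega))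
      have h2 := hstep b (by omega) (by omega)
      linarith
    · have : a = b := by omega
      subst this
      exact hstep a le_rfl (by omega)

lemma descent_step (w : ℕ → ℤ) (a b : ℕ) (hab : a < b) (h : w b < w a) :
    ∃ p, a ≤ p ∧ p < b ∧ w (p+1) < w p := by
  by_contra hc
  push_neg at hc
  have := mono_le w b a (le_of_lt hab) (fun p h1 h2 => hc p h1 h2)
  linarith

lemma ascent_step (w : ℕ → ℤ) (a b : ℕ) (hab : a < b) (h : w a < w b) :
    ∃ p, a ≤ p ∧ p < b ∧ w p < w (p+1) := by
  by_contra hc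
  push_neg at hc
  have := mono_ge w b a (le_of_lt hab) (fun p h1 h2 => hc p h1 h2)
  linarith

lemma find_valley (w : ℕ → ℤ) (p q : ℕ) (hp : 1 ≤ p) (hpq : p ≤ q)
    (hd : w (p+1) < w p) (ha : w q < w (q+1))
    (hinj : ∀ i j, p ≤ i → i ≤ q → p ≤ j → j ≤ q → w i = w j → i = j) :
    ∃ r, p < r ∧ r ≤ q ∧ w r < w (r-1) ∧ w r < w (r+1) := by
  have hpq' : p < q := by
    rcases Nat.lt_or_ge p q with h | h
    · exact h
    · have : p = q := by omega
      subst this; linarith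
  set T : Finset ℕ := (Finset.Ioc p q).filter (fun r => w r < w (r+1)) with hT
  have hqT : q ∈ T := by
    simp only [hT, Finset.mem_filter, Finset.mem_Ioc]
    exact ⟨⟨hpq', le_rfl⟩, ha⟩
  have hne : T.Nonempty := ⟨q, hqT⟩
  obtain ⟨r, hrdef⟩ : ∃ r, T.min' hne = r := ⟨_, rfl⟩
  have hrT := T.min'_mem hne
  rw [hrdef] at hrT
  simp only [hT, Finset.mem_filter, Finset.mem_Ioc] at hrT
  obtain ⟨⟨hr1, hr2⟩, hr3⟩ := hrT
  obtain ⟨s, rfl⟩ : ∃ s, r = s + 1 := ⟨r - 1, by omega⟩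
  refine ⟨s + 1, hr1, hr2, ?_, hr3⟩
  have hsub : s + 1 - 1 = s := by omega
  rw [hsub]
  rcases Nat.eq_or_lt_of_le (Nat.lt_iff_add_one_le.mp hr1) with he | hlt
  · -- p + 1 = s + 1, so s = p
    have : s = p := by omega
    subst this; exact hd
  · have hps : p < s := by omega
    have hsT : s ∉ T := by
      intro hmT
      have := T.min'_le s hmT
      rw [hrdef] at this
      omega
    have hle : w (s+1) ≤ w s := by
      by_contra hcon
      push_neg at hcon
      exact hsT (by
        simp only [hT, Finset.mem_filter, Finset.mem_Ioc]
        exact ⟨⟨hps, by omega⟩, hcon⟩)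
    rcases lt_or_eq_of_le hle with h | h
    · exact h
    · have := hinj (s+1) s (by omega) hr2 (by omega) (by omega) h
      omega

lemma find_peak (w : ℕ → ℤ) (p q : ℕ) (hp : 1 ≤ p) (hpq : p ≤ q)
    (hd : w p < w (p+1)) (ha : w (q+1) < w q)
    (hinj : ∀ i j, p ≤ i → i ≤ q → p ≤ j → j ≤ q → w i = w j → i = j) :
    ∃ r, p < r ∧ r ≤ q ∧ w (r-1) < w r ∧ w (r+1) < w r := by
  obtain ⟨r, h1, h2, h3, h4⟩ := find_valley (fun i => -w i) p q hp hpq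
    (by simpa using hd) (by simpa using ha)
    (fun i j hi1 hi2 hj1 hj2 hij => hinj i j hi1 hi2 hj1 hj2 (by
      have : -w i = -w j := hij
      linarith))
  refine ⟨r, h1, h2, ?_, ?_⟩
  · have : -w r < -w (r-1) := h3
    linarith
  · have : -w r < -w (r+1) := h4
    linarith

end Stmt1Aux

namespace Stmt1Aux

lemma run_desc (n : ℕ) (w : ℕ → ℤ)
    (hinj : ∀ i j, 1 ≤ i → i ≤ n → 1 ≤ j → j ≤ n → w i = w j → i = j)
    (a d : ℕ) (ha : 1 ≤ a) (hd0 : w (a+1) < w a) (had : a ≤ d) (hdn : d ≤ n - 1)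
    (hnc : ∀ r, a < r → r ≤ d → ¬ changesDir w r) :
    ∀ r, a ≤ r → r ≤ d → w (r+1) < w r := by
  intro r
  induction r with
  | zero => intro h1 h2; omega
  | succ r ih =>
    intro h1 h2
    rcases Nat.lt_or_ge a (r+1) with h | h
    · have hdr : w (r+1) < w r := ih (by omega) (by omega)
      have hch := hnc (r+1) (by omega) h2
      unfold changesDir at hch
      simp only [Nat.add_sub_cancel] at hch
      by_contra hcon
      push_neg at hcon
      -- hcon : w (r+1) ≤ w (r+1+1)
      rcases lt_or_eq_of_le hcon with hlt | heq
      · exact hch (Or.inr ⟨hdr, hlt⟩)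
      · have := hinj (r+1) (r+1+1) (by omega) (by omega) (by omega) (by omega) heq
        omega
    · have : a = r + 1 := by omega
      rw [← this]
      exact hd0

lemma run_asc (n : ℕ) (w : ℕ → ℤ)
    (hinj : ∀ i j, 1 ≤ i → i ≤ n → 1 ≤ j → j ≤ n → w i = w j → i = j)
    (a d : ℕ) (ha : 1 ≤ a) (hd0 : w a < w (a+1)) (had : a ≤ d) (hdn : d ≤ n - 1)
    (hnc : ∀ r, a < r → r ≤ d → ¬ changesDir w r) :
    ∀ r, a ≤ r → r ≤ d → w r < w (r+1) := by
  intro r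
  induction r with
  | zero => intro h1 h2; omega
  | succ r ih =>
    intro h1 h2
    rcases Nat.lt_or_ge a (r+1) with h | h
    · have hdr : w r < w (r+1) := ih (by omega) (by omega)
      have hch := hnc (r+1) (by omega) h2
      unfold changesDir at hch
      simp only [Nat.add_sub_cancel] at hch
      by_contra hcon
      push_neg at hcon
      rcases lt_or_eq_of_le hcon with hlt | heq
      · exact hch (Or.inl ⟨hdr, hlt⟩)
      · have := hinj (r+1+1) (r+1) (by omega) (by omega) (by omega) (by omega) heq
        omega
    · have : a = r + 1 := by omega
      rw [← this]
      exact hd0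

lemma build_chain (n : ℕ) (hn : 2 ≤ n) (w : ℕ → ℤ)
    (hinj : ∀ i j, 1 ≤ i → i ≤ n → 1 ≤ j → j ≤ n → w i = w j → i = j) :
    ∀ k a, n - a ≤ k → 1 ≤ a → a ≤ n - 1 →
      ((w (a+1) < w a → ∃ l : List ℕ, List.Chain' (· < ·) (a :: l) ∧
          (∀ i ∈ a :: l, 1 ≤ i ∧ i ≤ n) ∧ altChain w true (a :: l) ∧
          (a :: l).length = 2 + (((Finset.Icc 2 (n-1)).filter (changesDir w)).filter (a < ·)).card) ∧
       (w a < w (a+1) → ∃ l : List ℕ, List.Chain' (· < ·) (a :: l) ∧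
          (∀ i ∈ a :: l, 1 ≤ i ∧ i ≤ n) ∧ altChain w false (a :: l) ∧
          (a :: l).length = 2 + (((Finset.Icc 2 (n-1)).filter (changesDir w)).filter (a < ·)).card)) := by
  intro k
  induction k with
  | zero => intro a hk h1 h2; omega
  | succ k ih =>
    intro a hk h1 h2
    constructor
    · -- descent at a
      intro hstep
      by_cases hF : (((Finset.Icc 2 (n-1)).filter (changesDir w)).filter (a < ·)).Nonempty
      · obtain ⟨c, hcdef⟩ : ∃ c, (((Finset.Icc 2 (n-1)).filter (changesDir w)).filter (a < ·)).min' hF = c := ⟨_, rfl⟩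
        have hcF : c ∈ ((Finset.Icc 2 (n-1)).filter (changesDir w)).filter (a < ·) := by
          rw [← hcdef]; exact Finset.min'_mem _ hF
        have hcC := (Finset.mem_filter.mp hcF).1
        have hac : a < c := (Finset.mem_filter.mp hcF).2
        have hcI : 2 ≤ c ∧ c ≤ n - 1 := Finset.mem_Icc.mp (Finset.mem_filter.mp hcC).1
        have hcch : changesDir w c := (Finset.mem_filter.mp hcC).2
        have hnc : ∀ r, a < r → r ≤ c - 1 → ¬ changesDir w r := by
          intro r hr1 hr2 hch
          have hrF : r ∈ ((Finset.Icc 2 (n-1)).filter (changesDir w)).filter (a < ·) :=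
            Finset.mem_filter.mpr ⟨Finset.mem_filter.mpr
              ⟨Finset.mem_Icc.mpr ⟨by omega, by omega⟩, hch⟩, hr1⟩
          have := Finset.min'_le _ r hrF
          rw [hcdef] at this
          omega
        have hdesc := run_desc n w hinj a (c-1) h1 hstep (by omega) (by omega) hnc
        have hdc : w c < w (c-1) := by
          have h' := hdesc (c-1) (by omega) le_rfl
          have hrw : c - 1 + 1 = c := by omega
          rwa [hrw] at h'
        have hvalley : w c < w (c+1) := by
          rcases hcch with ⟨h1', h2'⟩ | ⟨h1', h2'⟩
          · linarith
          · exact h2'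
        have hwac : w c < w a := by
          apply strict_desc w c a hac
          intro p hp1 hp2
          exact hdesc p hp1 (by omega)
        obtain ⟨l, hch', hmem', halt', hlen'⟩ :=
          (ih c (by omega) (by omega) (by omega)).2 hvalley
        have hgeq : (((Finset.Icc 2 (n-1)).filter (changesDir w)).filter (a < ·)).card =
            1 + (((Finset.Icc 2 (n-1)).filter (changesDir w)).filter (c < ·)).card := by
          have hins : ((Finset.Icc 2 (n-1)).filter (changesDir w)).filter (a < ·) =
              insert c (((Finset.Icc 2 (n-1)).filter (changesDir w)).filter (c < ·)) := by
            ext x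
            constructor
            · intro hx
              have hmle := Finset.min'_le _ x hx
              rw [hcdef] at hmle
              rcases Nat.eq_or_lt_of_le hmle with h | h
              · exact Finset.mem_insert.mpr (Or.inl h.symm)
              · exact Finset.mem_insert.mpr (Or.inr (Finset.mem_filter.mpr
                  ⟨(Finset.mem_filter.mp hx).1, h⟩))
            · intro hx
              rcases Finset.mem_insert.mp hx with h | hx'
              · rw [h]; exact hcF
              · exact Finset.mem_filter.mpr ⟨(Finset.mem_filter.mp hx').1,
                  lt_trans hac (Finset.mem_filter.mp hx').2⟩
          rw [hins, Finset.card_insert_of_notMem (by simp)]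
          omega
        refine ⟨c :: l, ?_, ?_, ?_, ?_⟩
        · apply List.isChain_cons_cons.mpr
          exact ⟨hac, hch'⟩
        · intro i hi
          rcases List.mem_cons.mp hi with rfl | hi'
          · exact ⟨h1, by omega⟩
          · exact hmem' i hi'
        · simp only [altChain, if_true]
          exact ⟨hwac, halt'⟩
        · simp only [List.length_cons] at hlen' ⊢
          omega
      · -- no changes after a
        have hg : (((Finset.Icc 2 (n-1)).filter (changesDir w)).filter (a < ·)).card = 0 := by
          rw [Finset.not_nonempty_iff_eq_empty.mp hF]; rfl
        have hnc : ∀ r, a < r → r ≤ n - 1 → ¬ changesDir w r := by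
          intro r hr1 hr2 hch
          exact hF ⟨r, Finset.mem_filter.mpr ⟨Finset.mem_filter.mpr
            ⟨Finset.mem_Icc.mpr ⟨by omega, hr2⟩, hch⟩, hr1⟩⟩
        have hdesc := run_desc n w hinj a (n-1) h1 hstep h2 le_rfl hnc
        have hwa : w n < w a :=
          strict_desc w n a (by omega) (fun p hp1 hp2 => hdesc p hp1 (by omega))
        refine ⟨[n], ?_, ?_, ?_, ?_⟩
        · apply List.isChain_cons_cons.mpr
          exact ⟨by omega, List.isChain_singleton n⟩
        · intro i hi
          rcases List.mem_cons.mp hi with rfl | hi'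
          · exact ⟨h1, by omega⟩
          · simp at hi'
            omega
        · simp only [altChain, if_true]
          exact ⟨hwa, trivial⟩
        · simp [hg]
    · -- ascent at a
      intro hstep
      by_cases hF : (((Finset.Icc 2 (n-1)).filter (changesDir w)).filter (a < ·)).Nonempty
      · obtain ⟨c, hcdef⟩ : ∃ c, (((Finset.Icc 2 (n-1)).filter (changesDir w)).filter (a < ·)).min' hF = c := ⟨_, rfl⟩
        have hcF : c ∈ ((Finset.Icc 2 (n-1)).filter (changesDir w)).filter (a < ·) := by
          rw [← hcdef]; exact Finset.min'_mem _ hF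
        have hcC := (Finset.mem_filter.mp hcF).1
        have hac : a < c := (Finset.mem_filter.mp hcF).2
        have hcI : 2 ≤ c ∧ c ≤ n - 1 := Finset.mem_Icc.mp (Finset.mem_filter.mp hcC).1
        have hcch : changesDir w c := (Finset.mem_filter.mp hcC).2
        have hnc : ∀ r, a < r → r ≤ c - 1 → ¬ changesDir w r := by
          intro r hr1 hr2 hch
          have hrF : r ∈ ((Finset.Icc 2 (n-1)).filter (changesDir w)).filter (a < ·) :=
            Finset.mem_filter.mpr ⟨Finset.mem_filter.mpr
              ⟨Finset.mem_Icc.mpr ⟨by omega, by omega⟩, hch⟩, hr1⟩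
          have := Finset.min'_le _ r hrF
          rw [hcdef] at this
          omega
        have hasc := run_asc n w hinj a (c-1) h1 hstep (by omega) (by omega) hnc
        have hdc : w (c-1) < w c := by
          have h' := hasc (c-1) (by omega) le_rfl
          have hrw : c - 1 + 1 = c := by omega
          rwa [hrw] at h'
        have hpeak : w (c+1) < w c := by
          rcases hcch with ⟨h1', h2'⟩ | ⟨h1', h2'⟩
          · exact h2'
          · linarith
        have hwac : w a < w c := by
          apply strict_asc w c a hac
          intro p hp1 hp2
          exact hasc p hp1 (by omega)
        obtain ⟨l, hch', hmem', halt', hlen'⟩ :=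
          (ih c (by omega) (by omega) (by omega)).1 hpeak
        have hgeq : (((Finset.Icc 2 (n-1)).filter (changesDir w)).filter (a < ·)).card =
            1 + (((Finset.Icc 2 (n-1)).filter (changesDir w)).filter (c < ·)).card := by
          have hins : ((Finset.Icc 2 (n-1)).filter (changesDir w)).filter (a < ·) =
              insert c (((Finset.Icc 2 (n-1)).filter (changesDir w)).filter (c < ·)) := by
            ext x
            constructor
            · intro hx
              have hmle := Finset.min'_le _ x hx
              rw [hcdef] at hmle
              rcases Nat.eq_or_lt_of_le hmle with h | h
              · exact Finset.mem_insert.mpr (Or.inl h.symm)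
              · exact Finset.mem_insert.mpr (Or.inr (Finset.mem_filter.mpr
                  ⟨(Finset.mem_filter.mp hx).1, h⟩))
            · intro hx
              rcases Finset.mem_insert.mp hx with h | hx'
              · rw [h]; exact hcF
              · exact Finset.mem_filter.mpr ⟨(Finset.mem_filter.mp hx').1,
                  lt_trans hac (Finset.mem_filter.mp hx').2⟩
          rw [hins, Finset.card_insert_of_notMem (by simp)]
          omega
        refine ⟨c :: l, ?_, ?_, ?_, ?_⟩
        · apply List.isChain_cons_cons.mpr
          exact ⟨hac, hch'⟩
        · intro i hi
          rcases List.mem_cons.mp hi with rfl | hi'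
          · exact ⟨h1, by omega⟩
          · exact hmem' i hi'
        · simp only [altChain, if_false, Bool.not_false]
          exact ⟨hwac, halt'⟩
        · simp only [List.length_cons] at hlen' ⊢
          omega
      · have hg : (((Finset.Icc 2 (n-1)).filter (changesDir w)).filter (a < ·)).card = 0 := by
          rw [Finset.not_nonempty_iff_eq_empty.mp hF]; rfl
        have hnc : ∀ r, a < r → r ≤ n - 1 → ¬ changesDir w r := by
          intro r hr1 hr2 hch
          exact hF ⟨r, Finset.mem_filter.mpr ⟨Finset.mem_filter.mpr
            ⟨Finset.mem_Icc.mpr ⟨by omega, hr2⟩, hch⟩, hr1⟩⟩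
        have hasc := run_asc n w hinj a (n-1) h1 hstep h2 le_rfl hnc
        have hwa : w a < w n :=
          strict_asc w n a (by omega) (fun p hp1 hp2 => hasc p hp1 (by omega))
        refine ⟨[n], ?_, ?_, ?_, ?_⟩
        · apply List.isChain_cons_cons.mpr
          exact ⟨by omega, List.isChain_singleton n⟩
        · intro i hi
          rcases List.mem_cons.mp hi with rfl | hi'
          · exact ⟨h1, by omega⟩
          · simp at hi'
            omega
        · simp only [altChain, if_false, Bool.not_false]
          exact ⟨hwa, trivial⟩
        · simp [hg]

end Stmt1Aux

namespace Stmt1Aux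

lemma chain_bound (n : ℕ) (w : ℕ → ℤ)
    (hinj : ∀ i j, 1 ≤ i → i ≤ n → 1 ≤ j → j ≤ n → w i = w j → i = j) :
    ∀ (l : List ℕ) (dir : Bool) (p : ℕ), 1 ≤ p → p ≤ n - 1 →
      (cond dir (w (p+1) < w p) (w p < w (p+1))) →
      List.Chain' (· < ·) l → (∀ i ∈ l, 1 ≤ i ∧ i ≤ n) → (∀ i ∈ l, p < i) →
      altChain w (!dir) l →
      l.length ≤ 1 + (((Finset.Icc 2 (n-1)).filter (changesDir w)).filter (p < ·)).card := by
  intro l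
  induction l with
  | nil => intro dir p _ _ _ _ _ _ _; simp
  | cons x t ih =>
    intro dir p hp1 hp2 hstep hch hmem hgt halt
    rcases t with _ | ⟨y, rest⟩
    · simp
    · -- l = x :: y :: rest
      have hxy : x < y := (List.isChain_cons_cons.mp hch).1
      have hch2 : List.Chain' (· < ·) (y :: rest) := (List.isChain_cons_cons.mp hch).2
      have hx1 : 1 ≤ x := (hmem x (by simp)).1
      have hyn : y ≤ n := (hmem y (by simp)).2
      have hpx : p < x := hgt x (by simp)
      obtain ⟨hcomp, halt2⟩ := halt
      rw [Bool.not_not] at halt2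
      -- obtain a monotone step between x and y, of direction (!dir),
      -- then a direction change r between p and that step,
      -- then recurse
      have key : ∃ q, x ≤ q ∧ q < y ∧
          (cond (!dir) (w (q+1) < w q) (w q < w (q+1))) ∧
          (∃ r, p < r ∧ r ≤ q ∧ changesDir w r) := by
        cases dir with
        | true =>
          -- descent at p, ascent across (x, y)
          have hcomp' : w x < w y := by simpa using hcomp
          obtain ⟨q, hq1, hq2, hq3⟩ := ascent_step w x y hxy hcomp'
          have hqn : q ≤ n - 1 := by omega
          obtain ⟨r, hr1, hr2, hr3, hr4⟩ := find_valley w p q hp1 (by omega) hstep hq3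
            (fun i j hi1 hi2 hj1 hj2 hij => hinj i j (by omega) (by omega) (by omega) (by omega) hij)
          exact ⟨q, hq1, hq2, hq3, r, hr1, hr2, Or.inr ⟨hr3, hr4⟩⟩
        | false =>
          have hcomp' : w y < w x := by simpa using hcomp
          obtain ⟨q, hq1, hq2, hq3⟩ := descent_step w x y hxy hcomp'
          have hqn : q ≤ n - 1 := by omega
          obtain ⟨r, hr1, hr2, hr3, hr4⟩ := find_peak w p q hp1 (by omega) hstep hq3
            (fun i j hi1 hi2 hj1 hj2 hij => hinj i j (by omega) (by omega) (by omega) (by omega) hij)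
          exact ⟨q, hq1, hq2, hq3, r, hr1, hr2, Or.inl ⟨hr3, hr4⟩⟩
      obtain ⟨q, hq1, hq2, hstep', r, hr1, hr2, hrch⟩ := key
      have hrC : r ∈ (Finset.Icc 2 (n-1)).filter (changesDir w) :=
        Finset.mem_filter.mpr ⟨Finset.mem_Icc.mpr ⟨by omega, by omega⟩, hrch⟩
      have hcard : (((Finset.Icc 2 (n-1)).filter (changesDir w)).filter (q < ·)).card + 1 ≤
          (((Finset.Icc 2 (n-1)).filter (changesDir w)).filter (p < ·)).card := by
        have hsub : insert r (((Finset.Icc 2 (n-1)).filter (changesDir w)).filter (q < ·)) ⊆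
            ((Finset.Icc 2 (n-1)).filter (changesDir w)).filter (p < ·) := by
          intro z hz
          rcases Finset.mem_insert.mp hz with h | h
          · rw [h]; exact Finset.mem_filter.mpr ⟨hrC, hr1⟩
          · exact Finset.mem_filter.mpr ⟨(Finset.mem_filter.mp h).1,
              lt_of_le_of_lt (le_trans (le_of_lt hpx) hq1) (Finset.mem_filter.mp h).2⟩
        have hnotmem : r ∉ ((Finset.Icc 2 (n-1)).filter (changesDir w)).filter (q < ·) := by
          intro h
          have := (Finset.mem_filter.mp h).2
          omega
        have := Finset.card_le_card hsub
        rw [Finset.card_insert_of_notMem hnotmem] at this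
        exact this
      have hrec := ih (!dir) q (by omega) (by omega) hstep' hch2
        (fun i hi => hmem i (by simp [hi]))
        (fun i hi => by
          rcases List.mem_cons.mp hi with rfl | hi'
          · omega
          · have := List.rel_of_pairwise_cons (List.isChain_iff_pairwise.mp hch2) hi'
            omega)
        (by rw [Bool.not_not]; exact halt2)
      simp only [List.length_cons] at hrec ⊢
      omega

end Stmt1Aux



open Stmt1Aux in
/-- For `n ≥ 2` and `π ∈ S_n`, `as(π) = run(π)` if `π_1 < π_2`, and
`as(π) = run(π) + 1` if `π_1 > π_2`. -/
theorem statement1 (n : ℕ) (hn : 2 ≤ n) (π : Equiv.Perm (Fin n)) :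
    (permWord n π 1 < permWord n π 2 → las n π = runA n π) ∧
    (permWord n π 2 < permWord n π 1 → las n π = runA n π + 1) := by
  have hinj : ∀ i j, 1 ≤ i → i ≤ n → 1 ≤ j → j ≤ n →
      permWord n π i = permWord n π j → i = j := by
    intro i j hi1 hi2 hj1 hj2 hij
    unfold permWord at hij
    rw [dif_pos ⟨hi1, hi2⟩, dif_pos ⟨hj1, hj2⟩] at hij
    have h1 : ((π ⟨i - 1, by omega⟩ : Fin n) : ℕ) = ((π ⟨j - 1, by omega⟩ : Fin n) : ℕ) := by
      exact_mod_cast add_right_cancel hij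
    have h2 : (⟨i - 1, by omega⟩ : Fin n) = ⟨j - 1, by omega⟩ :=
      π.injective (Fin.val_injective h1)
    have h3 : i - 1 = j - 1 := congrArg Fin.val h2
    omega
  set w := permWord n π with hw
  set C := (Finset.Icc 2 (n-1)).filter (changesDir w) with hC
  have hrun : runA n π = 1 + C.card := rfl
  have hfilter_le : ∀ p : ℕ, (C.filter (p < ·)).card ≤ C.card :=
    fun p => Finset.card_filter_le _ _
  -- general upper bound: any valid alternating list has length ≤ 2 + C.card
  have hmub : ∀ l : List ℕ, List.Chain' (· < ·) l → (∀ i ∈ l, 1 ≤ i ∧ i ≤ n) →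
      altChain w true l → l.length ≤ 2 + C.card := by
    intro l hch hmem halt
    rcases l with _ | ⟨x, t⟩
    · simp
    rcases t with _ | ⟨y, rest⟩
    · simp; omega
    obtain ⟨hcomp, halt2⟩ := halt
    have hcomp' : w y < w x := by simpa using hcomp
    have hxy : x < y := (List.isChain_cons_cons.mp hch).1
    have hch2 := (List.isChain_cons_cons.mp hch).2
    have hx1 : 1 ≤ x := (hmem x (by simp)).1
    have hyn : y ≤ n := (hmem y (by simp)).2
    obtain ⟨p, hp1, hp2, hp3⟩ := descent_step w x y hxy hcomp'
    have hrec := chain_bound n w hinj (y :: rest) true p (by omega) (by omega) hp3 hch2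
      (fun i hi => hmem i (by simp [hi]))
      (fun i hi => by
        rcases List.mem_cons.mp hi with rfl | hi'
        · omega
        · have := List.rel_of_pairwise_cons (List.isChain_iff_pairwise.mp hch2) hi'
          omega)
      halt2
    rw [← hC] at hrec
    have hle := hfilter_le p
    simp only [List.length_cons] at hrec ⊢
    omega
  -- sharper upper bound in the ascending case
  have hmub2 : w 1 < w 2 → ∀ l : List ℕ, List.Chain' (· < ·) l → (∀ i ∈ l, 1 ≤ i ∧ i ≤ n) →
      altChain w true l → l.length ≤ 1 + C.card := by
    intro hasc l hch hmem halt
    rcases l with _ | ⟨x, t⟩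
    · simp
    rcases t with _ | ⟨y, rest⟩
    · simp
    obtain ⟨hcomp, halt2⟩ := halt
    have hcomp' : w y < w x := by simpa using hcomp
    have hxy : x < y := (List.isChain_cons_cons.mp hch).1
    have hch2 := (List.isChain_cons_cons.mp hch).2
    have hx1 : 1 ≤ x := (hmem x (by simp)).1
    have hyn : y ≤ n := (hmem y (by simp)).2
    obtain ⟨p, hp1, hp2, hp3⟩ := descent_step w x y hxy hcomp'
    have hp1' : 2 ≤ p := by
      rcases Nat.lt_or_ge p 2 with h | h
      · have : p = 1 := by omega
        rw [this] at hp3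
        have : w (1+1) = w 2 := rfl
        rw [this] at hp3
        linarith
      · exact h
    obtain ⟨r0, hr01, hr02, hr03, hr04⟩ := find_peak w 1 p (le_refl 1) (by omega) hasc hp3
      (fun i j hi1 hi2 hj1 hj2 hij => hinj i j (by omega) (by omega) (by omega) (by omega) hij)
    have hr0C : r0 ∈ C := by
      rw [hC]
      exact Finset.mem_filter.mpr ⟨Finset.mem_Icc.mpr ⟨by omega, by omega⟩,
        Or.inl ⟨hr03, hr04⟩⟩
    have hcard : (C.filter (p < ·)).card + 1 ≤ C.card := by
      have hsub : insert r0 (C.filter (p < ·)) ⊆ C := by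
        intro z hz
        rcases Finset.mem_insert.mp hz with h | h
        · rw [h]; exact hr0C
        · exact (Finset.mem_filter.mp h).1
      have hnotmem : r0 ∉ C.filter (p < ·) := by
        intro h
        have := (Finset.mem_filter.mp h).2
        omega
      have := Finset.card_le_card hsub
      rw [Finset.card_insert_of_notMem hnotmem] at this
      exact this
    have hrec := chain_bound n w hinj (y :: rest) true p (by omega) (by omega) hp3 hch2
      (fun i hi => hmem i (by simp [hi]))
      (fun i hi => by
        rcases List.mem_cons.mp hi with rfl | hi'
        · omega
        · have := List.rel_of_pairwise_cons (List.isChain_iff_pairwise.mp hch2) hi'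
          omega)
      halt2
    rw [← hC] at hrec
    simp only [List.length_cons] at hrec ⊢
    omega
  have hCfull : C.filter (1 < ·) = C := by
    apply Finset.filter_true_of_mem
    intro x hx
    have := Finset.mem_Icc.mp (Finset.mem_filter.mp hx).1
    omega
  constructor
  · -- ascending case
    intro hasc
    have hasc' : w 1 < w (1+1) := hasc
    obtain ⟨l, hch, hmem, halt, hlen⟩ :=
      (build_chain n hn w hinj n 1 (by omega) le_rfl (by omega)).2 hasc'
    rw [hCfull] at hlen
    -- the wanted list is l (the tail)
    rcases l with _ | ⟨x, rest⟩
    · simp only [List.length_cons, List.length_nil] at hlen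
      omega
    obtain ⟨_, halt2⟩ := halt
    have hlen2 : (x :: rest).length = 1 + C.card := by
      simp only [List.length_cons] at hlen ⊢
      omega
    have hmem' : (1 + C.card) ∈ {k | ∃ l : List ℕ, l.length = k ∧ l.Chain' (· < ·) ∧
        (∀ i ∈ l, 1 ≤ i ∧ i ≤ n) ∧ altChain w true l} :=
      ⟨x :: rest, hlen2, (List.isChain_cons_cons.mp hch).2,
        fun i hi => hmem i (by simp [hi]), halt2⟩
    have hub : ∀ b ∈ {k | ∃ l : List ℕ, l.length = k ∧ l.Chain' (· < ·) ∧
        (∀ i ∈ l, 1 ≤ i ∧ i ≤ n) ∧ altChain w true l}, b ≤ 1 + C.card := by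
      rintro b ⟨l, rfl, hch', hmem'', halt'⟩
      exact hmub2 hasc l hch' hmem'' halt'
    have : las n π = 1 + C.card := IsGreatest.csSup_eq ⟨hmem', hub⟩
    rw [this, hrun]
  · -- descending case
    intro hdesc
    have hdesc' : w (1+1) < w 1 := hdesc
    obtain ⟨l, hch, hmem, halt, hlen⟩ :=
      (build_chain n hn w hinj n 1 (by omega) le_rfl (by omega)).1 hdesc'
    rw [hCfull] at hlen
    have hmem' : (2 + C.card) ∈ {k | ∃ l : List ℕ, l.length = k ∧ l.Chain' (· < ·) ∧
        (∀ i ∈ l, 1 ≤ i ∧ i ≤ n) ∧ altChain w true l} :=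
      ⟨1 :: l, hlen, hch, hmem, halt⟩
    have hub : ∀ b ∈ {k | ∃ l : List ℕ, l.length = k ∧ l.Chain' (· < ·) ∧
        (∀ i ∈ l, 1 ≤ i ∧ i ≤ n) ∧ altChain w true l}, b ≤ 2 + C.card := by
      rintro b ⟨l', rfl, hch', hmem'', halt'⟩
      exact hmub l' hch' hmem'' halt'
    have : las n π = 2 + C.card := IsGreatest.csSup_eq ⟨hmem', hub⟩
    rw [this, hrun]
    omega
end

section
/- For every n ≥ 2, (1+x) R_n(x) = 2 Σ_{σ ∈ S_n} x^{as(σ)}. -/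
open Finset Polynomial

def sdir (w : ℕ → ℤ) (b : Bool) (q : ℕ) : Prop :=
  if b then w (q+1) < w q else w q < w (q+1)

instance (w : ℕ → ℤ) (b : Bool) : DecidablePred (sdir w b) := fun q => by
  unfold sdir; infer_instance

lemma mono_steps (w : ℕ → ℤ) :
    ∀ b a : ℕ, a ≤ b → (∀ t, a ≤ t → t < b → w t < w (t+1)) → w a ≤ w b := by
  intro b
  induction b with
  | zero => intro a ha _; interval_cases a; exact le_rfl
  | succ b ih =>
    intro a ha h
    rcases Nat.eq_or_lt_of_le ha with h1 | h1
    · rw [h1]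
    · have h2 : w a ≤ w b := ih a (by omega) (fun t ht1 ht2 => h t ht1 (by omega))
      have h3 : w b < w (b+1) := h b (by omega) (by omega)
      linarith

lemma exists_sdir (w : ℕ → ℤ) (b : Bool) {i j : ℕ} (hij : i < j)
    (hadj : ∀ t, i ≤ t → t < j → w t ≠ w (t+1))
    (hb : if b then w j < w i else w i < w j) :
    ∃ q, i ≤ q ∧ q < j ∧ sdir w b q := by
  by_contra hc
  push_neg at hc
  cases b with
  | true =>
    simp only [if_true] at hb
    have : w i ≤ w j := by
      refine mono_steps w j i (by omega) (fun t ht1 ht2 => ?_)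
      have h1 := hc t ht1 ht2
      have h2 := hadj t ht1 ht2
      simp only [sdir, if_true] at h1
      omega
    omega
  | false =>
    simp only [Bool.false_eq_true, if_false] at hb
    have : (fun t => -(w t)) i ≤ (fun t => -(w t)) j := by
      refine mono_steps (fun t => -(w t)) j i (by omega) (fun t ht1 ht2 => ?_)
      have h1 := hc t ht1 ht2
      have h2 := hadj t ht1 ht2
      simp only [sdir, Bool.false_eq_true, if_false] at h1
      show -(w t) < -(w (t+1))
      omega
    simp only at this
    omega

lemma exists_change (w : ℕ → ℤ) (d : Bool) : ∀ (q p : ℕ), p < q →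
    (∀ t, p ≤ t → t < q → w t ≠ w (t+1)) →
    sdir w d p → sdir w (!d) q → ∃ r, p + 1 ≤ r ∧ r ≤ q ∧ changesDir w r := by
  intro q
  induction q using Nat.strong_induction_on with
  | _ q ih =>
    intro p hpq hadj hp hq
    have hq1 : q - 1 + 1 = q := by omega
    by_cases h : sdir w d (q - 1)
    · refine ⟨q, by omega, le_rfl, ?_⟩
      cases d with
      | true =>
        simp only [sdir, if_true, hq1] at h
        simp only [sdir, Bool.not_true, Bool.false_eq_true, if_false] at hq
        exact Or.inr ⟨h, hq⟩
      | false =>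
        simp only [sdir, Bool.false_eq_true, if_false, hq1] at h
        simp only [sdir, Bool.not_false, if_true] at hq
        exact Or.inl ⟨h, hq⟩
    · have hadj' := hadj (q-1) (by omega) (by omega)
      rw [hq1] at hadj'
      have h' : sdir w (!d) (q - 1) := by
        cases d with
        | true =>
          simp only [sdir, if_true, hq1] at h
          simp only [sdir, Bool.not_true, Bool.false_eq_true, if_false, hq1]
          omega
        | false =>
          simp only [sdir, Bool.false_eq_true, if_false, hq1] at h
          simp only [sdir, Bool.not_false, if_true, hq1]
          omega
      have hppq : p ≠ q - 1 := by
        intro he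
        rw [← he] at h'
        cases d with
        | true =>
          simp only [sdir, if_true, Bool.not_true, Bool.false_eq_true, if_false] at hp h'
          omega
        | false =>
          simp only [sdir, Bool.false_eq_true, if_false, Bool.not_false, if_true] at hp h'
          omega
      obtain ⟨r, hr1, hr2, hr3⟩ := ih (q-1) (by omega) p (by omega)
        (fun t ht1 ht2 => hadj t ht1 (by omega)) hp h'
      exact ⟨r, hr1, by omega, hr3⟩

lemma altChain_dropLast (w : ℕ → ℤ) :
    ∀ (l : List ℕ) (b : Bool), altChain w b l → altChain w b l.dropLast := by
  intro l
  induction l with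
  | nil => intro b _; trivial
  | cons i rest ih =>
    intro b h
    match rest, h with
    | [], _ => trivial
    | [j], _ => trivial
    | j :: c :: rest', ⟨h1, h2⟩ =>
      have := ih (!b) h2
      simp only [List.dropLast] at this ⊢
      exact ⟨h1, this⟩

lemma altChain_concat (w : ℕ → ℤ) :
    ∀ (l : List ℕ) (b : Bool) (j x : ℕ), altChain w b l → l.getLast? = some j →
    (if (if l.length % 2 = 1 then b else !b) then w x < w j else w j < w x) →
    altChain w b (l ++ [x]) := by
  intro l
  induction l with
  | nil => intro b j x _ h _; simp at h
  | cons a rest ih =>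
    intro b j x h hlast hcmp
    match rest, h with
    | [], _ =>
      simp only [List.getLast?_singleton, Option.some.injEq] at hlast
      subst hlast
      simp only [List.length_singleton] at hcmp
      norm_num at hcmp
      exact ⟨hcmp, trivial⟩
    | c :: rest', ⟨h1, h2⟩ =>
      have hlast' : (c :: rest').getLast? = some j := by
        rwa [List.getLast?_cons_cons] at hlast
      have hcmp' : (if (if (c :: rest').length % 2 = 1 then !b else !(!b)) then w x < w j else w j < w x) := by
        have he : (if (a :: c :: rest').length % 2 = 1 then b else !b)
            = (if (c :: rest').length % 2 = 1 then !b else !(!b)) := by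
          simp only [List.length_cons, Bool.not_not]
          by_cases hc : (rest'.length + 1) % 2 = 1
          · rw [if_neg (show ¬((rest'.length + 1 + 1) % 2 = 1) by omega), if_pos hc]
          · rw [if_pos (show (rest'.length + 1 + 1) % 2 = 1 by omega), if_neg hc]
        rwa [he] at hcmp
      have := ih (!b) j x h2 hlast' hcmp'
      exact ⟨h1, this⟩

lemma altChain_last_cmp (w : ℕ → ℤ) :
    ∀ (l : List ℕ) (b : Bool) (p j : ℕ), altChain w b l → l.getLast? = some j →
    l.dropLast.getLast? = some p →
    (if (if l.length % 2 = 0 then b else !b) then w j < w p else w p < w j) := by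
  intro l
  induction l with
  | nil => intro b p j _ h _; simp at h
  | cons a rest ih =>
    intro b p j h hlast hplast
    match rest, h with
    | [], _ => simp at hplast
    | [c], ⟨h1, _⟩ =>
      simp only [List.getLast?_cons_cons, List.getLast?_singleton, Option.some.injEq] at hlast
      simp only [List.dropLast, List.getLast?_singleton, Option.some.injEq] at hplast
      subst hlast; subst hplast
      simpa using h1
    | c :: d :: rest', ⟨h1, h2⟩ =>
      have hlast' : (c :: d :: rest').getLast? = some j := by
        rwa [List.getLast?_cons_cons] at hlast
      have hplast' : (c :: d :: rest').dropLast.getLast? = some p := by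
        simp only [List.dropLast] at hplast ⊢
        rwa [List.getLast?_cons_cons] at hplast
      have := ih (!b) p j h2 hlast' hplast'
      have he : (if (c :: d :: rest').length % 2 = 0 then !b else !(!b))
          = (if (a :: c :: d :: rest').length % 2 = 0 then b else !b) := by
        simp only [List.length_cons, Bool.not_not]
        by_cases hc : (rest'.length + 1 + 1) % 2 = 0
        · rw [if_pos hc, if_neg (show ¬((rest'.length + 1 + 1 + 1) % 2 = 0) by omega)]
        · rw [if_neg hc, if_pos (show (rest'.length + 1 + 1 + 1) % 2 = 0 by omega)]
      rwa [he] at this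

lemma upperU (w : ℕ → ℤ) (n : ℕ) (hadj : ∀ t, 1 ≤ t → t < n → w t ≠ w (t+1)) :
    ∀ (l : List ℕ) (b d : Bool) (p : ℕ), 1 ≤ p → sdir w d p →
    l.Chain' (· < ·) → (∀ x ∈ l, p ≤ x ∧ x ≤ n) → altChain w b l →
    l.length ≤ 1 + ((Finset.Icc (p+1) (n-1)).filter (changesDir w)).card
      + (if b = d then 1 else 0) := by
  intro l
  induction l with
  | nil => intro b d p _ _ _ _ _; simp
  | cons i rest ih =>
    intro b d p hp hsp hch hbd halt
    match rest, halt with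
    | [], _ =>
      simp only [List.length_singleton]
      omega
    | j :: rest', ⟨hcomp, htail⟩ =>
      have hij : i < j := (List.isChain_cons_cons.mp hch).1
      have hch' : (j :: rest').Chain' (· < ·) := (List.isChain_cons_cons.mp hch).2
      have hi := hbd i (by simp)
      have hj := hbd j (by simp)
      obtain ⟨q, hiq, hqj, hq⟩ := exists_sdir w b hij
        (fun t ht1 ht2 => hadj t (by omega) (by omega)) hcomp
      have hq1 : (1:ℕ) ≤ q := by omega
      have hbd' : ∀ x ∈ j :: rest', q ≤ x ∧ x ≤ n := by
        intro x hx
        have h1 := hbd x (List.mem_cons_of_mem i hx)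
        have h2 : j ≤ x := by
          rcases List.mem_cons.mp hx with h | h
          · omega
          · have hpw := List.isChain_iff_pairwise.mp hch'
            have := (List.pairwise_cons.mp hpw).1 x h
            omega
        exact ⟨by omega, h1.2⟩
      have hrec := ih (!b) b q hq1 hq hch' hbd' htail
      have hb0 : (if (!b) = b then 1 else 0) = 0 := by cases b <;> simp
      rw [hb0] at hrec
      have hqn : q ≤ n - 1 := by omega
      by_cases hbd2 : b = d
      · rw [if_pos hbd2]
        have hsub : ((Finset.Icc (q+1) (n-1)).filter (changesDir w)).card
            ≤ ((Finset.Icc (p+1) (n-1)).filter (changesDir w)).card := by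
          apply Finset.card_le_card
          apply Finset.filter_subset_filter
          apply Finset.Icc_subset_Icc (by omega) le_rfl
        simp only [List.length_cons] at hrec ⊢
        omega
      · rw [if_neg hbd2]
        have hdb : b = !d := by
          revert hbd2; cases b <;> cases d <;> simp
        have hpq : p < q := by
          rcases Nat.lt_or_ge p q with h | h
          · exact h
          · exfalso
            have hqp : q = p := by omega
            rw [hqp, hdb] at hq
            cases d with
            | true => simp only [sdir, if_true, Bool.not_true, Bool.false_eq_true, if_false] at hq hsp; omega
            | false => simp only [sdir, Bool.false_eq_true, if_false, Bool.not_false, if_true] at hq hsp; omega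
        obtain ⟨r, hr1, hr2, hr3⟩ := exists_change w d q p hpq
          (fun t ht1 ht2 => hadj t (by omega) (by omega)) hsp (by rwa [← hdb])
        have hcard : ((Finset.Icc (q+1) (n-1)).filter (changesDir w)).card + 1
            ≤ ((Finset.Icc (p+1) (n-1)).filter (changesDir w)).card := by
          have hins : insert r ((Finset.Icc (q+1) (n-1)).filter (changesDir w))
              ⊆ (Finset.Icc (p+1) (n-1)).filter (changesDir w) := by
            apply Finset.insert_subset
            · simp only [Finset.mem_filter, Finset.mem_Icc]
              exact ⟨⟨by omega, by omega⟩, hr3⟩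
            · apply Finset.filter_subset_filter
              apply Finset.Icc_subset_Icc (by omega) le_rfl
          have hcardins := Finset.card_le_card hins
          rw [Finset.card_insert_of_notMem] at hcardins
          · omega
          · simp only [Finset.mem_filter, Finset.mem_Icc]
            intro hmem
            omega
        simp only [List.length_cons] at hrec ⊢
        omega

lemma chain'_concat_of_lt {l : List ℕ} (hch : l.Chain' (· < ·)) {a x : ℕ}
    (hl : l.getLast? = some a) (hax : a < x) : (l ++ [x]).Chain' (· < ·) := by
  apply List.IsChain.append hch (List.isChain_singleton x)
  intro y hy z hz
  simp only [List.head?_cons, Option.mem_def, Option.some.injEq] at hz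
  rw [hl] at hy
  simp only [Option.mem_def, Option.some.injEq] at hy
  omega

lemma mem_of_getLast?' {l : List ℕ} {p : ℕ} (h : l.getLast? = some p) : p ∈ l := by
  obtain ⟨hne, hpe⟩ := List.mem_getLast?_eq_getLast (Option.mem_def.mpr h)
  rw [hpe]; exact List.getLast_mem hne

lemma lowerL (w : ℕ → ℤ) (n : ℕ) (hadj : ∀ t, 1 ≤ t → t < n → w t ≠ w (t+1)) :
    ∀ m, 2 ≤ m → m ≤ n → ∃ l : List ℕ, l.Chain' (· < ·) ∧ (∀ x ∈ l, 1 ≤ x ∧ x ≤ m) ∧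
      altChain w true l ∧
      l.length = 1 + ((Finset.Icc 2 (m-1)).filter (changesDir w)).card
        + (if w 2 < w 1 then 1 else 0) ∧
      l.getLast? = some m ∧ (l.length % 2 = 1 ↔ w (m-1) < w m) := by
  intro m hm
  induction m, hm using Nat.le_induction with
  | base =>
    intro hn
    have h12 : w 1 ≠ w 2 := by
      have := hadj 1 (by omega) (by omega)
      norm_num at this
      exact this
    have hIcc : (Finset.Icc 2 (2-1)) = ∅ := by
      apply Finset.Icc_eq_empty; omega
    by_cases h : w 2 < w 1
    · refine ⟨[1, 2], ?_, ?_, ?_, ?_, ?_, ?_⟩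
      · simp [List.Chain', List.isChain_cons_cons]
      · intro x hx; simp at hx; omega
      · exact ⟨by simpa using h, trivial⟩
      · simp [hIcc, if_pos h]
      · rfl
      · simp only [List.length_cons, List.length_singleton]
        norm_num
        omega
    · have h' : w 1 < w 2 := by omega
      refine ⟨[2], ?_, ?_, ?_, ?_, ?_, ?_⟩
      · exact List.isChain_singleton _
      · intro x hx; simp at hx; omega
      · trivial
      · simp [hIcc, if_neg h]
      · rfl
      · simp only [List.length_singleton]
        norm_num
        exact h'
  | succ m hm ih =>
    intro hn
    obtain ⟨l, hch, hbd, halt, hlen, hlast, hpar⟩ := ih (by omega)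
    have hm1 : m - 1 + 1 = m := by omega
    have hadjm := hadj m (by omega) (by omega)
    have hadjm1 : w (m-1) ≠ w m := by
      have := hadj (m-1) (by omega) (by omega)
      rwa [hm1] at this
    have hk1 : 1 ≤ l.length := by
      cases l with
      | nil => simp at hlast
      | cons a t => simp
    have hIcc : Finset.Icc 2 (m + 1 - 1) = insert m (Finset.Icc 2 (m-1)) := by
      have h2 : m + 1 - 1 = m := by omega
      rw [h2]
      ext t
      simp only [Finset.mem_Icc, Finset.mem_insert]
      omega
    have hmni : m ∉ Finset.Icc 2 (m-1) := by
      simp only [Finset.mem_Icc]; omega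
    have hcount : ((Finset.Icc 2 (m + 1 - 1)).filter (changesDir w)).card
        = ((Finset.Icc 2 (m-1)).filter (changesDir w)).card
          + (if changesDir w m then 1 else 0) := by
      rw [hIcc, Finset.filter_insert]
      by_cases hc : changesDir w m
      · rw [if_pos hc, if_pos hc,
          Finset.card_insert_of_notMem (fun hx => hmni (Finset.mem_of_mem_filter m hx))]
      · rw [if_neg hc, if_neg hc, Nat.add_zero]
    have hms : m + 1 - 1 = m := by omega
    by_cases hup : w m < w (m+1)
    · by_cases hprev : w (m-1) < w m
      · -- (b) no change, ascending run: replace last element by m+1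
        have hnc : ¬ changesDir w m := by
          intro hc
          rcases hc with ⟨_, h2⟩ | ⟨h1, _⟩ <;> omega
        have hkodd : l.length % 2 = 1 := hpar.mpr hprev
        rcases Nat.lt_or_ge l.length 2 with hk2 | hk2
        · refine ⟨[m+1], ?_, ?_, ?_, ?_, ?_, ?_⟩
          · exact List.isChain_singleton _
          · intro x hx; simp at hx; omega
          · trivial
          · rw [hcount, if_neg hnc]
            simp only [List.length_singleton]
            omega
          · rfl
          · simp only [List.length_singleton, hms]
            constructor
            · intro _; exact hup
            · intro _; trivial
        · obtain ⟨p, hpl⟩ : ∃ p, l.dropLast.getLast? = some p := by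
            cases hdl : l.dropLast with
            | nil =>
              exfalso
              have := congrArg List.length hdl
              simp only [List.length_dropLast, List.length_nil] at this
              omega
            | cons a t => exact ⟨(a :: t).getLast (by simp), List.getLast?_eq_getLast _⟩
          have hcmp0 := altChain_last_cmp w l true p m halt hlast hpl
          have hcmp : w p < w m := by
            simp only [if_neg (show ¬ (l.length % 2 = 0) by omega), Bool.not_true,
              Bool.false_eq_true, if_false] at hcmp0
            exact hcmp0
          have hpm : p ∈ l := (List.dropLast_sublist l).subset (mem_of_getLast?' hpl)
          have hpbd := hbd p hpm
          have hchd : l.dropLast.Chain' (· < ·) := by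
            rw [List.Chain', List.isChain_iff_pairwise] at hch ⊢
            exact hch.sublist (List.dropLast_sublist l)
          have hdlen : l.dropLast.length % 2 = 0 := by
            rw [List.length_dropLast]; omega
          refine ⟨l.dropLast ++ [m+1], ?_, ?_, ?_, ?_, ?_, ?_⟩
          · exact chain'_concat_of_lt hchd hpl (by omega)
          · intro x hx
            rcases List.mem_append.mp hx with h | h
            · have := hbd x ((List.dropLast_sublist l).subset h)
              omega
            · simp at h; omega
          · apply altChain_concat w l.dropLast true p (m+1) (altChain_dropLast w l true halt) hpl
            simp only [if_neg (show ¬ (l.dropLast.length % 2 = 1) by omega), Bool.not_true,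
              Bool.false_eq_true, if_false]
            omega
          · simp only [List.length_append, List.length_dropLast, List.length_singleton]
            rw [hcount, if_neg hnc]
            omega
          · exact List.getLast?_concat
          · simp only [List.length_append, List.length_dropLast, List.length_singleton, hms]
            constructor
            · intro _; exact hup
            · intro _; omega
      · -- (c) valley at m: append m+1
        have hprev' : w m < w (m-1) := by omega
        have hc : changesDir w m := Or.inr ⟨hprev', hup⟩
        have hkeven : l.length % 2 = 0 := by
          rcases Nat.mod_two_eq_zero_or_one l.length with h | h
          · exact h
          · exact absurd (hpar.mp h) hprev
        refine ⟨l ++ [m+1], ?_, ?_, ?_, ?_, ?_, ?_⟩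
        · exact chain'_concat_of_lt hch hlast (by omega)
        · intro x hx
          rcases List.mem_append.mp hx with h | h
          · have := hbd x h; omega
          · simp at h; omega
        · apply altChain_concat w l true m (m+1) halt hlast
          simp only [if_neg (show ¬ (l.length % 2 = 1) by omega), Bool.not_true,
            Bool.false_eq_true, if_false]
          exact hup
        · simp only [List.length_append, List.length_singleton]
          rw [hcount, if_pos hc]
          omega
        · exact List.getLast?_concat
        · simp only [List.length_append, List.length_singleton, hms]
          constructor
          · intro _; exact hup
          · intro _; omega
    · have hdown : w (m+1) < w m := by omega
      by_cases hprev : w (m-1) < w m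
      · -- (a) peak at m: append m+1
        have hc : changesDir w m := Or.inl ⟨hprev, hdown⟩
        have hkodd : l.length % 2 = 1 := hpar.mpr hprev
        refine ⟨l ++ [m+1], ?_, ?_, ?_, ?_, ?_, ?_⟩
        · exact chain'_concat_of_lt hch hlast (by omega)
        · intro x hx
          rcases List.mem_append.mp hx with h | h
          · have := hbd x h; omega
          · simp at h; omega
        · apply altChain_concat w l true m (m+1) halt hlast
          simp only [if_pos hkodd, if_true]
          exact hdown
        · simp only [List.length_append, List.length_singleton]
          rw [hcount, if_pos hc]
          omega
        · exact List.getLast?_concat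
        · simp only [List.length_append, List.length_singleton, hms]
          constructor
          · intro h2; omega
          · intro h2; omega
      · -- (d) descending run: replace last element by m+1
        have hprev' : w m < w (m-1) := by omega
        have hnc : ¬ changesDir w m := by
          intro hc
          rcases hc with ⟨h1, _⟩ | ⟨_, h2⟩ <;> omega
        have hkeven : l.length % 2 = 0 := by
          rcases Nat.mod_two_eq_zero_or_one l.length with h | h
          · exact h
          · exact absurd (hpar.mp h) hprev
        have hk2 : 2 ≤ l.length := by omega
        obtain ⟨p, hpl⟩ : ∃ p, l.dropLast.getLast? = some p := by
          cases hdl : l.dropLast with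
          | nil =>
            exfalso
            have := congrArg List.length hdl
            simp only [List.length_dropLast, List.length_nil] at this
            omega
          | cons a t => exact ⟨(a :: t).getLast (by simp), List.getLast?_eq_getLast _⟩
        have hcmp0 := altChain_last_cmp w l true p m halt hlast hpl
        have hcmp : w m < w p := by
          simp only [if_pos hkeven, if_true] at hcmp0
          exact hcmp0
        have hpm : p ∈ l := (List.dropLast_sublist l).subset (mem_of_getLast?' hpl)
        have hpbd := hbd p hpm
        have hchd : l.dropLast.Chain' (· < ·) := by
          rw [List.Chain', List.isChain_iff_pairwise] at hch ⊢
          exact hch.sublist (List.dropLast_sublist l)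
        have hdlen : l.dropLast.length % 2 = 1 := by
          rw [List.length_dropLast]; omega
        refine ⟨l.dropLast ++ [m+1], ?_, ?_, ?_, ?_, ?_, ?_⟩
        · exact chain'_concat_of_lt hchd hpl (by omega)
        · intro x hx
          rcases List.mem_append.mp hx with h | h
          · have := hbd x ((List.dropLast_sublist l).subset h)
            omega
          · simp at h; omega
        · apply altChain_concat w l.dropLast true p (m+1) (altChain_dropLast w l true halt) hpl
          simp only [if_pos hdlen, if_true]
          omega
        · simp only [List.length_append, List.length_dropLast, List.length_singleton]
          rw [hcount, if_neg hnc]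
          omega
        · exact List.getLast?_concat
        · simp only [List.length_append, List.length_dropLast, List.length_singleton, hms]
          constructor
          · intro h2; omega
          · intro h2; omega

lemma permWord_pos (n : ℕ) (σ : Equiv.Perm (Fin n)) {i : ℕ} (h1 : 1 ≤ i) (h2 : i ≤ n) :
    permWord n σ i = ((σ ⟨i - 1, by omega⟩ : ℕ) : ℤ) + 1 := by
  simp only [permWord]
  rw [dif_pos ⟨h1, h2⟩]

lemma permWord_adj (n : ℕ) (σ : Equiv.Perm (Fin n)) :
    ∀ t, 1 ≤ t → t < n → permWord n σ t ≠ permWord n σ (t+1) := by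
  intro t h1 h2 he
  rw [permWord_pos n σ h1 (by omega : t ≤ n), permWord_pos n σ (by omega : 1 ≤ t + 1) (by omega : t + 1 ≤ n)] at he
  have hv : (σ ⟨t - 1, by omega⟩ : ℕ) = (σ ⟨t + 1 - 1, by omega⟩ : ℕ) := by omega
  have hσ : σ ⟨t - 1, by omega⟩ = σ ⟨t + 1 - 1, by omega⟩ := Fin.val_injective hv
  have := σ.injective hσ
  have := Fin.mk.injEq (t-1) _ (t+1-1) _ ▸ this
  omega

lemma las_eq (n : ℕ) (hn : 2 ≤ n) (σ : Equiv.Perm (Fin n)) :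
    las n σ = runA n σ + (if permWord n σ 2 < permWord n σ 1 then 1 else 0) := by
  classical
  set w := permWord n σ with hw
  have hadj := permWord_adj n σ
  have hbdd : ∀ k ∈ {k | ∃ l : List ℕ, l.length = k ∧ l.Chain' (· < ·) ∧
      (∀ i ∈ l, 1 ≤ i ∧ i ≤ n) ∧ altChain w true l}, k ≤ n := by
    rintro k ⟨l, hlen, hch, hbd, -⟩
    have hnd : l.Nodup :=
      List.Pairwise.imp (fun h => Nat.ne_of_lt h) (List.isChain_iff_pairwise.mp hch)
    have h1 : l.toFinset ⊆ Finset.Icc 1 n := by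
      intro x hx
      rw [List.mem_toFinset] at hx
      have := hbd x hx
      rw [Finset.mem_Icc]
      omega
    have h2 := Finset.card_le_card h1
    rw [List.toFinset_card_of_nodup hnd, Nat.card_Icc] at h2
    omega
  have hne : {k | ∃ l : List ℕ, l.length = k ∧ l.Chain' (· < ·) ∧
      (∀ i ∈ l, 1 ≤ i ∧ i ≤ n) ∧ altChain w true l}.Nonempty :=
    ⟨0, [], rfl, List.isChain_nil, by simp, trivial⟩
  have hBdd : BddAbove {k | ∃ l : List ℕ, l.length = k ∧ l.Chain' (· < ·) ∧
      (∀ i ∈ l, 1 ≤ i ∧ i ≤ n) ∧ altChain w true l} := ⟨n, fun k hk => hbdd k hk⟩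
  have hmem : las n σ ∈ {k | ∃ l : List ℕ, l.length = k ∧ l.Chain' (· < ·) ∧
      (∀ i ∈ l, 1 ≤ i ∧ i ≤ n) ∧ altChain w true l} := Nat.sSup_mem hne hBdd
  have hupper : las n σ ≤ 1 + ((Finset.Icc 2 (n-1)).filter (changesDir w)).card
      + (if w 2 < w 1 then 1 else 0) := by
    obtain ⟨l, hlen, hch, hbd, halt⟩ := hmem
    rw [← hlen]
    match l, halt with
    | [], _ => simp
    | [i], _ => simp only [List.length_singleton]; split_ifs <;> omega
    | i :: j :: rest, halt =>
      by_cases hD : w 2 < w 1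
      · have hsd : sdir w true 1 := by
          simp only [sdir, if_true]
          norm_num
          exact hD
        have := upperU w n hadj (i :: j :: rest) true true 1 le_rfl hsd hch
          (fun x hx => ⟨(hbd x hx).1, (hbd x hx).2⟩) halt
        rw [if_pos rfl] at this
        rw [if_pos hD]
        norm_num at this ⊢
        exact this
      · have h12 : w 1 < w 2 := by
          have h12' := hadj 1 (by omega) (by omega)
          rw [← hw] at h12'
          norm_num at h12'
          omega
        have hsd : sdir w false 1 := by
          simp only [sdir, Bool.false_eq_true, if_false]
          norm_num
          exact h12
        have := upperU w n hadj (i :: j :: rest) true false 1 le_rfl hsd hch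
          (fun x hx => ⟨(hbd x hx).1, (hbd x hx).2⟩) halt
        rw [if_neg (by simp)] at this
        rw [if_neg hD]
        norm_num at this ⊢
        exact this
  have hlower : 1 + ((Finset.Icc 2 (n-1)).filter (changesDir w)).card
      + (if w 2 < w 1 then 1 else 0) ≤ las n σ := by
    obtain ⟨l, hch, hbd, halt, hlen, -, -⟩ := lowerL w n hadj n hn le_rfl
    apply le_csSup hBdd
    exact ⟨l, hlen, hch, fun x hx => (hbd x hx), halt⟩
  have : las n σ = 1 + ((Finset.Icc 2 (n-1)).filter (changesDir w)).card
      + (if w 2 < w 1 then 1 else 0) := le_antisymm hupper hlower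
  rw [this, runA]

lemma permWord_rev (n : ℕ) (σ : Equiv.Perm (Fin n)) {i : ℕ} (h1 : 1 ≤ i) (h2 : i ≤ n) :
    permWord n (Fin.revPerm * σ) i = (n : ℤ) + 1 - permWord n σ i := by
  rw [permWord_pos n _ h1 h2, permWord_pos n σ h1 h2]
  have happ : (((Fin.revPerm * σ : Equiv.Perm (Fin n)) (⟨i - 1, by omega⟩ : Fin n)) : ℕ)
      = n - ((σ (⟨i - 1, by omega⟩ : Fin n) : ℕ) + 1) := by
    rw [Equiv.Perm.mul_apply, Fin.revPerm_apply, Fin.val_rev]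
  rw [happ]
  have hlt : (σ (⟨i - 1, by omega⟩ : Fin n) : ℕ) < n := Fin.is_lt _
  rw [Nat.cast_sub (by omega : (σ (⟨i - 1, by omega⟩ : Fin n) : ℕ) + 1 ≤ n)]
  push_cast
  ring

lemma revPerm_mul_revPerm_mul (n : ℕ) (σ : Equiv.Perm (Fin n)) :
    Fin.revPerm * (Fin.revPerm * σ) = σ := by
  ext x
  simp [Equiv.Perm.mul_apply]

lemma runA_rev (n : ℕ) (σ : Equiv.Perm (Fin n)) :
    runA n (Fin.revPerm * σ) = runA n σ := by
  unfold runA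
  congr 1
  apply congrArg Finset.card
  apply Finset.filter_congr
  intro i hi
  simp only [Finset.mem_Icc] at hi
  have hn3 : 3 ≤ n := by omega
  have e1 := permWord_rev n σ (by omega : 1 ≤ i - 1) (by omega : i - 1 ≤ n)
  have e2 := permWord_rev n σ (by omega : 1 ≤ i) (by omega : i ≤ n)
  have e3 := permWord_rev n σ (by omega : 1 ≤ i + 1) (by omega : i + 1 ≤ n)
  unfold changesDir
  rw [e1, e2, e3]
  constructor
  · rintro (⟨h1, h2⟩ | ⟨h1, h2⟩)
    · exact Or.inr ⟨by omega, by omega⟩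
    · exact Or.inl ⟨by omega, by omega⟩
  · rintro (⟨h1, h2⟩ | ⟨h1, h2⟩)
    · exact Or.inr ⟨by omega, by omega⟩
    · exact Or.inl ⟨by omega, by omega⟩

lemma dflip (n : ℕ) (hn : 2 ≤ n) (σ : Equiv.Perm (Fin n)) :
    (permWord n (Fin.revPerm * σ) 2 < permWord n (Fin.revPerm * σ) 1)
      ↔ ¬ (permWord n σ 2 < permWord n σ 1) := by
  have hne : permWord n σ 1 ≠ permWord n σ 2 := by
    have := permWord_adj n σ 1 (by omega) (by omega)
    norm_num at this
    exact this
  rw [permWord_rev n σ (by omega : 1 ≤ 2) hn, permWord_rev n σ le_rfl (by omega : 1 ≤ n)]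
  constructor
  · intro h h'; omega
  · intro h; omega

/-- For `n ≥ 2`, `(1+x) R_n(x) = 2 Σ_{σ ∈ S_n} x^{as(σ)}`. -/
theorem statement5 (n : ℕ) (hn : 2 ≤ n) :
    (1 + X) * runPoly n = 2 * ∑ σ : Equiv.Perm (Fin n), (X : Polynomial ℤ) ^ las n σ := by
  classical
  have hlas : ∀ σ : Equiv.Perm (Fin n), (X : Polynomial ℤ) ^ las n σ
      = if permWord n σ 2 < permWord n σ 1 then X ^ (runA n σ + 1) else X ^ runA n σ := by
    intro σ
    rw [las_eq n hn σ]
    split_ifs with h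
    · rfl
    · rw [Nat.add_zero]
  have hswap : ∀ f : Equiv.Perm (Fin n) → Polynomial ℤ,
      (∀ σ, f (Fin.revPerm * σ) = f σ) →
      (∑ σ ∈ Finset.univ.filter (fun σ => permWord n σ 2 < permWord n σ 1), f σ)
      = ∑ σ ∈ Finset.univ.filter (fun σ => ¬ permWord n σ 2 < permWord n σ 1), f σ := by
    intro f hf
    refine Finset.sum_nbij' (fun σ => Fin.revPerm * σ) (fun σ => Fin.revPerm * σ)
      ?_ ?_ ?_ ?_ ?_
    · intro a ha
      simp only [Finset.mem_filter, Finset.mem_univ, true_and] at ha ⊢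
      intro hc
      exact ((dflip n hn a).mp hc) ha
    · intro a ha
      simp only [Finset.mem_filter, Finset.mem_univ, true_and] at ha ⊢
      exact (dflip n hn a).mpr ha
    · intro a _; exact revPerm_mul_revPerm_mul n a
    · intro a _; exact revPerm_mul_revPerm_mul n a
    · intro a _; exact (hf a).symm
  set P : Equiv.Perm (Fin n) → Prop := fun σ => permWord n σ 2 < permWord n σ 1 with hP
  set A : Polynomial ℤ := ∑ σ ∈ Finset.univ.filter P, X ^ (runA n σ + 1) with hA
  set A' : Polynomial ℤ := ∑ σ ∈ Finset.univ.filter (fun σ => ¬ P σ), X ^ (runA n σ + 1) with hA'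
  set B : Polynomial ℤ := ∑ σ ∈ Finset.univ.filter (fun σ => ¬ P σ), X ^ (runA n σ) with hB
  set B' : Polynomial ℤ := ∑ σ ∈ Finset.univ.filter P, X ^ (runA n σ) with hB'
  have hAA : A = A' := by
    rw [hA, hA']
    exact hswap (fun σ => X ^ (runA n σ + 1)) (fun σ => by simp only [runA_rev])
  have hBB : B' = B := by
    rw [hB, hB']
    exact hswap (fun σ => X ^ (runA n σ)) (fun σ => by simp only [runA_rev])
  have hsum : (∑ σ : Equiv.Perm (Fin n), (X : Polynomial ℤ) ^ las n σ) = A + B := by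
    rw [Finset.sum_congr rfl (fun σ _ => hlas σ), Finset.sum_ite]
  have hR : runPoly n = B' + B := by
    rw [runPoly, hB, hB', Finset.sum_filter_add_sum_filter_not]
  have hXR : X * runPoly n = A + A' := by
    rw [runPoly, Finset.mul_sum, hA, hA']
    rw [← Finset.sum_filter_add_sum_filter_not Finset.univ P (fun σ => X * X ^ (runA n σ))]
    exact congrArg₂ (· + ·) (Finset.sum_congr rfl (fun σ _ => by rw [pow_succ X (runA n σ), mul_comm])) (Finset.sum_congr rfl (fun σ _ => by rw [pow_succ X (runA n σ), mul_comm]))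
  rw [hsum]
  calc (1 + X) * runPoly n = runPoly n + X * runPoly n := by ring
    _ = (B' + B) + (A + A') := by rw [hXR, hR]
    _ = 2 * (A + B) := by rw [hAA, hBB]; ring
end

section
/- (David–Barton) For every n ≥ 2 and every real x with −1 < x ≤ 1, setting w = √((1−x)/(1+x)), one has R_n(x) = ((1+x)/2)^{n−1} (1+w)^{n+1} A_n((1−w)/(1+w)), where R_n and A_n are evaluated at the indicated real numbers. -/
open Finset Polynomial

/-! ### Auxiliary development for statement9 -/

namespace DB9

open Finset Polynomial

/-! #### Basic word lemmas -/

lemma permWord_pos (n : ℕ) (σ : Equiv.Perm (Fin n)) {i : ℕ} (h1 : 1 ≤ i) (h2 : i ≤ n) :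
    1 ≤ permWord n σ i := by
  unfold permWord; rw [dif_pos ⟨h1, h2⟩]; omega

lemma permWord_le (n : ℕ) (σ : Equiv.Perm (Fin n)) {i : ℕ} (h1 : 1 ≤ i) (h2 : i ≤ n) :
    permWord n σ i ≤ n := by
  unfold permWord; rw [dif_pos ⟨h1, h2⟩]
  have := (σ ⟨i - 1, by omega⟩).isLt
  omega

lemma permWord_zero_of_gt (n : ℕ) (σ : Equiv.Perm (Fin n)) {i : ℕ} (h : n < i) :
    permWord n σ i = 0 := by
  unfold permWord; rw [dif_neg]; omega

lemma permWord_zero' (n : ℕ) (σ : Equiv.Perm (Fin n)) : permWord n σ 0 = 0 := by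
  unfold permWord; rw [dif_neg]; omega

lemma permWord_inj (n : ℕ) (σ : Equiv.Perm (Fin n)) {i j : ℕ} (h1 : 1 ≤ i) (h2 : i ≤ n)
    (h3 : 1 ≤ j) (h4 : j ≤ n) (h : permWord n σ i = permWord n σ j) : i = j := by
  unfold permWord at h
  rw [dif_pos ⟨h1, h2⟩, dif_pos ⟨h3, h4⟩] at h
  have : σ ⟨i - 1, by omega⟩ = σ ⟨j - 1, by omega⟩ := by
    apply Fin.ext; omega
  have := σ.injective this
  have := congrArg Fin.val this
  simp only at this
  omega

/-! #### The insertion bijection -/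

section Ins
variable {n : ℕ}

def insFun (σ : Equiv.Perm (Fin n)) (p : Fin (n+1)) : Fin (n+1) → Fin (n+1) := fun j =>
  if h : (j : ℕ) < (p : ℕ) then (σ ⟨j, by omega⟩).castSucc
  else if h2 : (j : ℕ) = (p : ℕ) then Fin.last n
  else (σ ⟨(j : ℕ) - 1, by have := j.isLt; have := p.isLt; omega⟩).castSucc

lemma insFun_lt (σ : Equiv.Perm (Fin n)) (p : Fin (n+1)) {j : Fin (n+1)} (h : (j:ℕ) < (p:ℕ)) :
    insFun σ p j = (σ ⟨j, by have := p.isLt; omega⟩).castSucc := by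
  unfold insFun; rw [dif_pos h]

lemma insFun_eq (σ : Equiv.Perm (Fin n)) (p : Fin (n+1)) {j : Fin (n+1)} (h : (j:ℕ) = (p:ℕ)) :
    insFun σ p j = Fin.last n := by
  unfold insFun; rw [dif_neg (by omega), dif_pos h]

lemma insFun_gt (σ : Equiv.Perm (Fin n)) (p : Fin (n+1)) {j : Fin (n+1)} (h : (p:ℕ) < (j:ℕ)) :
    insFun σ p j = (σ ⟨(j:ℕ) - 1, by have := j.isLt; omega⟩).castSucc := by
  unfold insFun; rw [dif_neg (by omega), dif_neg (by omega)]

lemma castSucc_sigma_inj (σ : Equiv.Perm (Fin n)) {a b : Fin n}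
    (h : (σ a).castSucc = (σ b).castSucc) : (a : ℕ) = (b : ℕ) := by
  have := σ.injective (Fin.castSucc_injective n h)
  exact congrArg Fin.val this

lemma insFun_inj (σ : Equiv.Perm (Fin n)) (p : Fin (n+1)) : Function.Injective (insFun σ p) := by
  intro a b hab
  apply Fin.ext
  rcases Nat.lt_trichotomy (a:ℕ) (p:ℕ) with hA | hA | hA <;>
    rcases Nat.lt_trichotomy (b:ℕ) (p:ℕ) with hB | hB | hB
  · rw [insFun_lt σ p hA, insFun_lt σ p hB] at hab
    simpa using castSucc_sigma_inj σ hab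
  · rw [insFun_lt σ p hA, insFun_eq σ p hB] at hab
    exact absurd hab (Fin.castSucc_lt_last _).ne
  · rw [insFun_lt σ p hA, insFun_gt σ p hB] at hab
    have := castSucc_sigma_inj σ hab; simp at this; omega
  · rw [insFun_eq σ p hA, insFun_lt σ p hB] at hab
    exact absurd hab.symm (Fin.castSucc_lt_last _).ne
  · omega
  · rw [insFun_eq σ p hA, insFun_gt σ p hB] at hab
    exact absurd hab.symm (Fin.castSucc_lt_last _).ne
  · rw [insFun_gt σ p hA, insFun_lt σ p hB] at hab
    have := castSucc_sigma_inj σ hab; simp at this; omega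
  · rw [insFun_gt σ p hA, insFun_eq σ p hB] at hab
    exact absurd hab (Fin.castSucc_lt_last _).ne
  · rw [insFun_gt σ p hA, insFun_gt σ p hB] at hab
    have := castSucc_sigma_inj σ hab; simp at this; omega

noncomputable def insPerm (σ : Equiv.Perm (Fin n)) (p : Fin (n+1)) : Equiv.Perm (Fin (n+1)) :=
  Equiv.ofBijective (insFun σ p) (Finite.injective_iff_bijective.mp (insFun_inj σ p))

lemma insPerm_apply (σ : Equiv.Perm (Fin n)) (p : Fin (n+1)) (j : Fin (n+1)) :
    insPerm σ p j = insFun σ p j := rfl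

lemma insPerm_inj2 : Function.Injective
    (fun sp : Equiv.Perm (Fin n) × Fin (n+1) => insPerm sp.1 sp.2) := by
  rintro ⟨σ, p⟩ ⟨σ', p'⟩ h
  simp only at h
  have happ : ∀ j, insFun σ p j = insFun σ' p' j := fun j => by
    have := congrFun (congrArg (fun (e : Equiv.Perm (Fin (n+1))) => (e : Fin (n+1) → Fin (n+1))) h) j
    simpa [insPerm_apply] using this
  have hpp : p = p' := by
    apply Fin.ext
    by_contra hne
    rcases Nat.lt_or_ge (p:ℕ) (p':ℕ) with hc | hc
    · have := happ p
      rw [insFun_eq σ p rfl, insFun_lt σ' p' hc] at this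
      exact absurd this.symm (Fin.castSucc_lt_last _).ne
    · have := happ p'
      rw [insFun_eq σ' p' rfl, insFun_lt σ p (by omega)] at this
      exact absurd this (Fin.castSucc_lt_last _).ne
  subst hpp
  have hss : σ = σ' := by
    apply Equiv.ext
    intro i
    have hi := i.isLt
    have hp := p.isLt
    by_cases hc : (i:ℕ) < (p:ℕ)
    · have h1 := happ (Fin.castSucc i)
      rw [insFun_lt σ p (by simpa using hc), insFun_lt σ' p (by simpa using hc)] at h1
      have h2 := Fin.castSucc_injective n h1
      simpa using h2
    · have h1 := happ (Fin.succ i)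
      rw [insFun_gt σ p (by simp; omega), insFun_gt σ' p (by simp; omega)] at h1
      have h2 := Fin.castSucc_injective n h1
      simp only [Fin.val_succ, Nat.add_sub_cancel] at h2
      simpa using h2
  exact Prod.ext hss rfl

lemma insPerm_bij : Function.Bijective
    (fun sp : Equiv.Perm (Fin n) × Fin (n+1) => insPerm sp.1 sp.2) := by
  rw [Fintype.bijective_iff_injective_and_card]
  refine ⟨insPerm_inj2, ?_⟩
  simp [Fintype.card_perm, Nat.factorial_succ, Nat.mul_comm]

/-- The word of the inserted permutation. -/
lemma permWord_insPerm (σ : Equiv.Perm (Fin n)) (p : Fin (n+1)) (i : ℕ) :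
    permWord (n+1) (insPerm σ p) i =
      if i ≤ (p:ℕ) then permWord n σ i
      else if i = (p:ℕ) + 1 then ((n:ℤ) + 1)
      else permWord n σ (i - 1) := by
  have hp := p.isLt
  by_cases hin : 1 ≤ i ∧ i ≤ n + 1
  · rw [show permWord (n+1) (insPerm σ p) i
        = ((insPerm σ p ⟨i - 1, by omega⟩ : ℕ) : ℤ) + 1 from by
      unfold permWord; rw [dif_pos hin]]
    rw [insPerm_apply]
    rcases Nat.lt_trichotomy (i - 1) (p:ℕ) with hc | hc | hc
    · rw [insFun_lt σ p (j := ⟨i - 1, by omega⟩) hc]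
      rw [if_pos (by omega)]
      unfold permWord
      rw [dif_pos ⟨hin.1, by omega⟩]
      simp
    · rw [insFun_eq σ p (j := ⟨i - 1, by omega⟩) hc]
      rw [if_neg (by omega), if_pos (by omega)]
      simp [Fin.last]
    · rw [insFun_gt σ p (j := ⟨i - 1, by omega⟩) hc]
      rw [if_neg (by omega), if_neg (by omega)]
      unfold permWord
      rw [dif_pos (by omega : 1 ≤ i - 1 ∧ i - 1 ≤ n)]
      simp
  · rw [show permWord (n+1) (insPerm σ p) i = 0 from by unfold permWord; rw [dif_neg hin]]
    have hi0 : i = 0 ∨ n + 1 < i := by omega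
    rcases hi0 with h0 | h0
    · subst h0
      rw [if_pos (by omega)]
      unfold permWord; rw [dif_neg (by omega)]
    · rw [if_neg (by omega), if_neg (by omega)]
      unfold permWord; rw [dif_neg (by omega)]

end Ins

end DB9
namespace DB9
open Finset Polynomial

/-! #### Descents -/

lemma sum_Ico_shift (f : ℕ → ℕ) (a b : ℕ) :
    ∑ i ∈ Finset.Ico (a+1) (b+1), f (i-1) = ∑ i ∈ Finset.Ico a b, f i := by
  rw [Finset.sum_Ico_eq_sum_range, Finset.sum_Ico_eq_sum_range]
  have h : b + 1 - (a + 1) = b - a := by omega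
  rw [h]
  exact Finset.sum_congr rfl fun i _ => by congr 1; omega

lemma sum_Ico_shift' (f : ℕ → ℕ) (a b c d : ℕ) (h1 : c = a + 1) (h2 : d = b + 1) :
    ∑ i ∈ Finset.Ico c d, f (i-1) = ∑ i ∈ Finset.Ico a b, f i := by
  subst h1; subst h2; exact sum_Ico_shift f a b

lemma sum_Ico_top (f : ℕ → ℕ) (a b c : ℕ) (h : b = c + 1) (h2 : a ≤ c) :
    ∑ i ∈ Finset.Ico a b, f i = (∑ i ∈ Finset.Ico a c, f i) + f c := by
  subst h; exact Finset.sum_Ico_succ_top h2 f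

lemma desA_eq_sum {n : ℕ} (hn : 1 ≤ n) (σ : Equiv.Perm (Fin n)) :
    desA n σ = ∑ i ∈ Finset.Ico 1 n,
      (if permWord n σ (i+1) < permWord n σ i then 1 else 0) := by
  unfold desA
  rw [Finset.card_filter]
  apply Finset.sum_congr _ (fun _ _ => rfl)
  ext i
  simp only [Finset.mem_Icc, Finset.mem_Ico]
  omega

lemma desA_le (n : ℕ) (σ : Equiv.Perm (Fin n)) : desA n σ ≤ n - 1 := by
  unfold desA
  calc ((Finset.Icc 1 (n-1)).filter _).card ≤ (Finset.Icc 1 (n-1)).card :=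
        Finset.card_filter_le _ _
    _ = n - 1 := by rw [Nat.card_Icc]; omega

section InsVals
variable {n : ℕ} (σ : Equiv.Perm (Fin n)) (p : Fin (n+1))

lemma insVal_le (i : ℕ) (h : i ≤ (p:ℕ)) :
    permWord (n+1) (insPerm σ p) i = permWord n σ i := by
  rw [permWord_insPerm, if_pos h]

lemma insVal_mid : permWord (n+1) (insPerm σ p) ((p:ℕ)+1) = (n:ℤ)+1 := by
  rw [permWord_insPerm, if_neg (by omega), if_pos rfl]

lemma insVal_mid' (i : ℕ) (h : i = (p:ℕ)+1) :
    permWord (n+1) (insPerm σ p) i = (n:ℤ)+1 := by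
  rw [permWord_insPerm, if_neg (by omega), if_pos h]

lemma insVal_gt (i : ℕ) (h : (p:ℕ)+1 < i) :
    permWord (n+1) (insPerm σ p) i = permWord n σ (i-1) := by
  rw [permWord_insPerm, if_neg (by omega), if_neg (by omega)]

end InsVals

lemma desA_insPerm {n : ℕ} (hn : 1 ≤ n) (σ : Equiv.Perm (Fin n)) (p : Fin (n+1)) :
    desA (n+1) (insPerm σ p) = desA n σ +
      (if (p:ℕ) = n then 0
       else if permWord n σ ((p:ℕ)+1) < permWord n σ (p:ℕ) then 0 else 1) := by
  have hp : (p:ℕ) ≤ n := by have := p.isLt; omega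
  have hwle : ∀ i, 1 ≤ i → i ≤ n → permWord n σ i ≤ n := fun i h1 h2 => permWord_le n σ h1 h2
  have hwpos : ∀ i, 1 ≤ i → i ≤ n → 1 ≤ permWord n σ i := fun i h1 h2 => permWord_pos n σ h1 h2
  rw [desA_eq_sum (by omega) (insPerm σ p)]
  by_cases hPn : (p:ℕ) = n
  · -- insertion at the very end
    rw [if_pos hPn]
    rw [Finset.sum_Ico_succ_top (by omega : 1 ≤ n)]
    have h1 : ∀ i ∈ Finset.Ico 1 n,
        (if permWord (n+1) (insPerm σ p) (i+1) < permWord (n+1) (insPerm σ p) i then 1 else 0)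
        = (if permWord n σ (i+1) < permWord n σ i then 1 else 0) := by
      intro i hi
      simp only [Finset.mem_Ico] at hi
      rw [insVal_le σ p i (by omega), insVal_le σ p (i+1) (by omega)]
    rw [Finset.sum_congr rfl h1]
    have h2 : (if permWord (n+1) (insPerm σ p) (n+1) < permWord (n+1) (insPerm σ p) n then 1 else 0)
        = 0 := by
      rw [insVal_le σ p n (by omega), insVal_mid' σ p (n+1) (by omega)]
      have := hwle n (by omega) le_rfl
      rw [if_neg (by omega)]
    rw [h2, desA_eq_sum hn σ]
  · have hPlt : (p:ℕ) < n := by omega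
    rw [if_neg hPn]
    by_cases hP0 : (p:ℕ) = 0
    · -- insertion at the front
      have hfalse : ¬ (permWord n σ ((p:ℕ)+1) < permWord n σ (p:ℕ)) := by
        rw [hP0]
        have h1 := hwpos 1 le_rfl hn
        have h0 : permWord n σ 0 = 0 := permWord_zero' n σ
        simp only [Nat.zero_add]
        omega
      rw [if_neg hfalse]
      rw [Finset.sum_eq_sum_Ico_succ_bot (by omega : 1 < n + 1)]
      have h1 : (if permWord (n+1) (insPerm σ p) 2 < permWord (n+1) (insPerm σ p) 1 then 1 else 0)
          = 1 := by
        rw [insVal_mid' σ p 1 (by omega), insVal_gt σ p 2 (by omega)]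
        have := hwle (2-1) (by omega) (by omega)
        rw [if_pos (by omega)]
      rw [h1]
      have h2 : ∀ i ∈ Finset.Ico 2 (n+1),
          (if permWord (n+1) (insPerm σ p) (i+1) < permWord (n+1) (insPerm σ p) i then 1 else 0)
          = (if permWord n σ (i-1+1) < permWord n σ (i-1) then 1 else 0) := by
        intro i hi
        simp only [Finset.mem_Ico] at hi
        rw [insVal_gt σ p i (by omega), insVal_gt σ p (i+1) (by omega),
          show i + 1 - 1 = i - 1 + 1 by omega]
      rw [Finset.sum_congr rfl h2]
      rw [show (2:ℕ) = 1 + 1 from rfl,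
        sum_Ico_shift (fun i => if permWord n σ (i+1) < permWord n σ i then 1 else 0) 1 n]
      rw [desA_eq_sum hn σ]
      omega
    · -- insertion in the middle, 1 ≤ P < n
      have hP1 : 1 ≤ (p:ℕ) := by omega
      rw [← Finset.sum_Ico_consecutive _ (by omega : 1 ≤ (p:ℕ)) (by omega : (p:ℕ) ≤ n + 1)]
      rw [← Finset.sum_Ico_consecutive _ (by omega : (p:ℕ) ≤ (p:ℕ) + 2)
        (by omega : (p:ℕ) + 2 ≤ n + 1)]
      rw [Finset.sum_Ico_succ_top (by omega : (p:ℕ) ≤ (p:ℕ) + 1),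
        Finset.sum_Ico_succ_top (le_refl (p:ℕ)), Finset.Ico_self, Finset.sum_empty]
      have e1 : ∀ i ∈ Finset.Ico 1 (p:ℕ),
          (if permWord (n+1) (insPerm σ p) (i+1) < permWord (n+1) (insPerm σ p) i then 1 else 0)
          = (if permWord n σ (i+1) < permWord n σ i then 1 else 0) := by
        intro i hi
        simp only [Finset.mem_Ico] at hi
        rw [insVal_le σ p i (by omega), insVal_le σ p (i+1) (by omega)]
      have e2 : (if permWord (n+1) (insPerm σ p) ((p:ℕ)+1) < permWord (n+1) (insPerm σ p) (p:ℕ)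
          then 1 else 0) = 0 := by
        rw [insVal_le σ p (p:ℕ) le_rfl, insVal_mid]
        have := hwle (p:ℕ) hP1 (by omega)
        rw [if_neg (by omega)]
      have e3 : (if permWord (n+1) (insPerm σ p) ((p:ℕ)+1+1) < permWord (n+1) (insPerm σ p) ((p:ℕ)+1)
          then 1 else 0) = 1 := by
        rw [insVal_mid, insVal_gt σ p ((p:ℕ)+1+1) (by omega)]
        have := hwle ((p:ℕ)+1+1-1) (by omega) (by omega)
        rw [if_pos (by omega)]
      have e4 : ∀ i ∈ Finset.Ico ((p:ℕ)+2) (n+1),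
          (if permWord (n+1) (insPerm σ p) (i+1) < permWord (n+1) (insPerm σ p) i then 1 else 0)
          = (if permWord n σ (i-1+1) < permWord n σ (i-1) then 1 else 0) := by
        intro i hi
        simp only [Finset.mem_Ico] at hi
        rw [insVal_gt σ p i (by omega), insVal_gt σ p (i+1) (by omega),
          show i + 1 - 1 = i - 1 + 1 by omega]
      rw [Finset.sum_congr rfl e1, e2, e3, Finset.sum_congr rfl e4]
      rw [show (p:ℕ) + 2 = ((p:ℕ)+1)+1 from rfl,
        sum_Ico_shift (fun i => if permWord n σ (i+1) < permWord n σ i then 1 else 0) ((p:ℕ)+1) n]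
      rw [desA_eq_sum hn σ]
      rw [← Finset.sum_Ico_consecutive _ (by omega : 1 ≤ (p:ℕ)) (by omega : (p:ℕ) ≤ n)]
      rw [Finset.sum_eq_sum_Ico_succ_bot (by omega : (p:ℕ) < n)]
      by_cases hdes : permWord n σ ((p:ℕ)+1) < permWord n σ (p:ℕ)
      · rw [if_pos hdes, if_pos hdes]; omega
      · rw [if_neg hdes, if_neg hdes]; omega

end DB9
namespace DB9
open Finset Polynomial

/-- Real-coefficient Eulerian polynomial. -/
noncomputable def AP (n : ℕ) : Polynomial ℝ :=
  ∑ σ : Equiv.Perm (Fin n), X ^ (desA n σ + 1)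

lemma card_des_range {n : ℕ} (hn : 1 ≤ n) (σ : Equiv.Perm (Fin n)) :
    ((Finset.range n).filter (fun q => permWord n σ (q+1) < permWord n σ q)).card
      = desA n σ := by
  rw [Finset.card_filter, Finset.range_eq_Ico,
    Finset.sum_eq_sum_Ico_succ_bot (by omega : 0 < n)]
  have h0 : (if permWord n σ (0+1) < permWord n σ 0 then 1 else 0) = 0 := by
    have h1 := permWord_pos n σ (le_refl 1) hn
    have h2 := permWord_zero' n σ
    simp only [Nat.zero_add]
    rw [if_neg (by omega)]
  rw [h0, desA_eq_sum hn σ]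
  simp only [Nat.zero_add]

lemma AP_slot {n : ℕ} (hn : 1 ≤ n) (σ : Equiv.Perm (Fin n)) :
    ∑ p : Fin (n+1), (X : Polynomial ℝ) ^ (desA (n+1) (insPerm σ p) + 1)
      = (desA n σ + 1) • (X : Polynomial ℝ) ^ (desA n σ + 1)
        + (n - desA n σ) • (X : Polynomial ℝ) ^ (desA n σ + 2) := by
  have h1 : ∀ p : Fin (n+1), (X : Polynomial ℝ) ^ (desA (n+1) (insPerm σ p) + 1)
      = (X : Polynomial ℝ) ^ (desA n σ +
          (if (p:ℕ) = n then 0 else if permWord n σ ((p:ℕ)+1) < permWord n σ (p:ℕ) then 0 else 1)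
            + 1) :=
    fun p => by rw [desA_insPerm hn σ p]
  have step1 : ∑ p : Fin (n+1), (X : Polynomial ℝ) ^ (desA (n+1) (insPerm σ p) + 1)
      = ∑ q ∈ Finset.range (n+1), (X : Polynomial ℝ) ^ (desA n σ +
          (if q = n then 0 else if permWord n σ (q+1) < permWord n σ q then 0 else 1) + 1) := by
    rw [Finset.sum_congr rfl (fun p _ => h1 p)]
    exact Fin.sum_univ_eq_sum_range (fun q => (X : Polynomial ℝ) ^ (desA n σ +
      (if q = n then 0 else if permWord n σ (q+1) < permWord n σ q then 0 else 1) + 1)) (n+1)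
  rw [step1]
  rw [Finset.sum_range_succ, if_pos rfl]
  have h2 : ∀ q ∈ Finset.range n,
      (X : Polynomial ℝ) ^ (desA n σ +
          (if q = n then 0 else if permWord n σ (q+1) < permWord n σ q then 0 else 1) + 1)
      = (if permWord n σ (q+1) < permWord n σ q
          then (X : Polynomial ℝ) ^ (desA n σ + 1) else (X : Polynomial ℝ) ^ (desA n σ + 2)) := by
    intro q hq
    simp only [Finset.mem_range] at hq
    rw [if_neg (by omega)]
    by_cases hd : permWord n σ (q+1) < permWord n σ q
    · rw [if_pos hd, if_pos hd]
    · rw [if_neg hd, if_neg hd]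
  rw [Finset.sum_congr rfl h2, Finset.sum_ite, Finset.sum_const, Finset.sum_const,
    card_des_range hn σ]
  have h3 : ((Finset.range n).filter (fun q => ¬ permWord n σ (q+1) < permWord n σ q)).card
      = n - desA n σ := by
    have := Finset.card_filter_add_card_filter_not
      (s := Finset.range n) (p := fun q => permWord n σ (q+1) < permWord n σ q)
    rw [card_des_range hn σ] at this
    rw [Finset.card_range] at this
    omega
  rw [h3, Nat.add_zero, succ_nsmul]
  abel

lemma AP_rec {n : ℕ} (hn : 1 ≤ n) :
    AP (n+1) = X * (1 - X) * derivative (AP n) + ((n : Polynomial ℝ) + 1) * X * AP n := by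
  unfold AP
  rw [← Function.Bijective.sum_comp insPerm_bij (fun τ => (X:Polynomial ℝ) ^ (desA (n+1) τ + 1))]
  rw [Fintype.sum_prod_type]
  simp only
  rw [Finset.sum_congr rfl (fun σ _ => AP_slot hn σ)]
  rw [derivative_sum]
  rw [Finset.mul_sum, Finset.mul_sum, ← Finset.sum_add_distrib]
  apply Finset.sum_congr rfl
  intro σ _
  have hd : desA n σ ≤ n - 1 := desA_le n σ
  rw [derivative_X_pow]
  simp only [Nat.cast_add, Nat.cast_one, map_add, map_one, Polynomial.C_eq_natCast]
  rw [nsmul_eq_mul, nsmul_eq_mul]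
  push_cast [Nat.cast_sub (by omega : desA n σ ≤ n)]
  ring
end DB9
namespace DB9
open Finset Polynomial

/-! #### Runs: groundwork -/

lemma permWord_le' (n : ℕ) (σ : Equiv.Perm (Fin n)) (i : ℕ) : permWord n σ i ≤ n := by
  unfold permWord
  split_ifs with h
  · have := (σ ⟨i - 1, by omega⟩).isLt; omega
  · omega

lemma permWord_nonneg (n : ℕ) (σ : Equiv.Perm (Fin n)) (i : ℕ) : 0 ≤ permWord n σ i := by
  unfold permWord
  split_ifs with h
  · omega
  · omega

lemma permWord_ne (n : ℕ) (σ : Equiv.Perm (Fin n)) {i j : ℕ} (h1 : 1 ≤ i) (h2 : i ≤ n)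
    (h3 : 1 ≤ j) (h4 : j ≤ n) (h : i ≠ j) : permWord n σ i ≠ permWord n σ j :=
  fun hc => h (permWord_inj n σ h1 h2 h3 h4 hc)

/-- change-of-direction indicator between positions `(i, i+1)` and `(i+1, i+2)`. -/
def chg (w : ℕ → ℤ) (i : ℕ) : ℕ :=
  if (w i < w (i+1)) ↔ (w (i+1) < w (i+2)) then 0 else 1

instance (w : ℕ → ℤ) (i : ℕ) : Decidable ((w i < w (i+1)) ↔ (w (i+1) < w (i+2))) := by
  infer_instance

lemma runA_eq_sum_chg {n : ℕ} (hn : 2 ≤ n) (σ : Equiv.Perm (Fin n)) :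
    runA n σ = 1 + ∑ i ∈ Finset.Ico 1 (n-1), chg (permWord n σ) i := by
  unfold runA
  congr 1
  rw [Finset.card_filter]
  have hset : Finset.Icc 2 (n-1) = Finset.Ico (1+1) ((n-1)+1) := by
    ext i; simp only [Finset.mem_Icc, Finset.mem_Ico]; omega
  rw [hset]
  rw [show ∑ i ∈ Finset.Ico (1+1) ((n-1)+1), (if changesDir (permWord n σ) i then 1 else 0)
      = ∑ i ∈ Finset.Ico (1+1) ((n-1)+1), (fun j => if changesDir (permWord n σ) (j+1) then 1 else 0) (i-1) from
    Finset.sum_congr rfl (fun i hi => by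
      simp only [Finset.mem_Ico] at hi
      simp only []
      rw [show i - 1 + 1 = i by omega])]
  rw [sum_Ico_shift (fun j => if changesDir (permWord n σ) (j+1) then 1 else 0) 1 (n-1)]
  apply Finset.sum_congr rfl
  intro i hi
  simp only [Finset.mem_Ico] at hi
  -- i ∈ [1, n-2]; compare changesDir at i+1 with chg at i
  have h1 : permWord n σ i ≠ permWord n σ (i+1) :=
    permWord_ne n σ (by omega) (by omega) (by omega) (by omega) (by omega)
  have h2 : permWord n σ (i+1) ≠ permWord n σ (i+2) :=
    permWord_ne n σ (by omega) (by omega) (by omega) (by omega) (by omega)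
  unfold chg changesDir
  have e1 : i + 1 - 1 = i := by omega
  have e2 : i + 1 + 1 = i + 2 := by omega
  simp only [e1, e2]
  by_cases hA : permWord n σ i < permWord n σ (i+1) <;>
    by_cases hB : permWord n σ (i+1) < permWord n σ (i+2)
  · rw [if_neg (by omega), if_pos (by tauto)]
  · rw [if_pos (by omega), if_neg (by tauto)]
  · rw [if_pos (by omega), if_neg (by tauto)]
  · rw [if_neg (by omega), if_pos (by tauto)]

end DB9
namespace DB9
open Finset Polynomial

section SlotChg
variable {m : ℕ} (σ : Equiv.Perm (Fin (m+2))) (p : Fin (m+3))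

-- abbreviations (not defs, to keep rewriting easy)
-- W := permWord (m+2) σ ;  W' := permWord (m+3) (insPerm σ p)

lemma chg_low {i : ℕ} (h : i + 2 ≤ (p:ℕ)) :
    chg (permWord (m+3) (insPerm σ p)) i = chg (permWord (m+2) σ) i := by
  unfold chg
  rw [insVal_le σ p i (by omega), insVal_le σ p (i+1) (by omega), insVal_le σ p (i+2) (by omega)]

lemma chg_atPm1 (h : 1 ≤ (p:ℕ)) :
    chg (permWord (m+3) (insPerm σ p)) ((p:ℕ)-1)
      = if permWord (m+2) σ ((p:ℕ)-1) < permWord (m+2) σ (p:ℕ) then 0 else 1 := by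
  unfold chg
  have e1 : (p:ℕ) - 1 + 1 = (p:ℕ) := by omega
  have e2 : (p:ℕ) - 1 + 2 = (p:ℕ) + 1 := by omega
  simp only [e1, e2]
  rw [insVal_le σ p ((p:ℕ)-1) (by omega), insVal_le σ p (p:ℕ) le_rfl, insVal_mid σ p]
  have hB : permWord (m+2) σ (p:ℕ) < ((m+2:ℕ):ℤ) + 1 := by
    have := permWord_le' (m+2) σ (p:ℕ); omega
  by_cases hA : permWord (m+2) σ ((p:ℕ)-1) < permWord (m+2) σ (p:ℕ)
  · rw [if_pos ⟨fun _ => hB, fun _ => hA⟩, if_pos hA]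
  · rw [if_neg (fun hc => hA (hc.mpr hB)), if_neg hA]

lemma chg_atP (h : (p:ℕ) + 1 ≤ m + 2) :
    chg (permWord (m+3) (insPerm σ p)) (p:ℕ) = 1 := by
  unfold chg
  rw [insVal_le σ p (p:ℕ) le_rfl, insVal_mid σ p, insVal_gt σ p ((p:ℕ)+2) (by omega)]
  have e1 : (p:ℕ) + 2 - 1 = (p:ℕ) + 1 := by omega
  simp only [e1]
  have hA : permWord (m+2) σ (p:ℕ) < ((m+2:ℕ):ℤ) + 1 := by
    have := permWord_le' (m+2) σ (p:ℕ); omega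
  have hB : ¬ (((m+2:ℕ):ℤ) + 1 < permWord (m+2) σ ((p:ℕ)+1)) := by
    have := permWord_le' (m+2) σ ((p:ℕ)+1); omega
  rw [if_neg (fun hc => hB (hc.mp hA))]

lemma chg_atP1 (h : (p:ℕ) + 2 ≤ m + 2) :
    chg (permWord (m+3) (insPerm σ p)) ((p:ℕ)+1)
      = if permWord (m+2) σ ((p:ℕ)+1) < permWord (m+2) σ ((p:ℕ)+2) then 1 else 0 := by
  unfold chg
  have e0 : (p:ℕ) + 1 + 1 = (p:ℕ) + 2 := by omega
  have e1 : (p:ℕ) + 1 + 2 = (p:ℕ) + 3 := by omega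
  simp only [e0, e1]
  simp only [insVal_mid σ p, insVal_gt σ p ((p:ℕ)+2) (by omega),
    insVal_gt σ p ((p:ℕ)+3) (by omega)]
  have e2 : (p:ℕ) + 2 - 1 = (p:ℕ) + 1 := by omega
  have e3 : (p:ℕ) + 3 - 1 = (p:ℕ) + 2 := by omega
  simp only [e2, e3]
  have hA : ¬ (((m+2:ℕ):ℤ) + 1 < permWord (m+2) σ ((p:ℕ)+1)) := by
    have := permWord_le' (m+2) σ ((p:ℕ)+1); omega
  by_cases hB : permWord (m+2) σ ((p:ℕ)+1) < permWord (m+2) σ ((p:ℕ)+2)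
  · rw [if_neg (fun hc => hA (hc.mpr hB)), if_pos hB]
  · rw [if_pos ⟨fun hc => absurd hc hA, fun hc => absurd hc hB⟩, if_neg hB]

lemma chg_high {i : ℕ} (h : (p:ℕ) + 2 ≤ i) :
    chg (permWord (m+3) (insPerm σ p)) i = chg (permWord (m+2) σ) (i-1) := by
  unfold chg
  rw [insVal_gt σ p i (by omega), insVal_gt σ p (i+1) (by omega), insVal_gt σ p (i+2) (by omega)]
  have e1 : i + 1 - 1 = i - 1 + 1 := by omega
  have e2 : i + 2 - 1 = i - 1 + 2 := by omega
  simp only [e1, e2]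

end SlotChg

end DB9
namespace DB9
open Finset Polynomial

section Slots
variable {m : ℕ} (σ : Equiv.Perm (Fin (m+2))) (p : Fin (m+3))

lemma runA_eq2 : runA (m+2) σ = 1 + ∑ i ∈ Finset.Ico 1 (m+1), chg (permWord (m+2) σ) i := by
  rw [runA_eq_sum_chg (by omega) σ, show m+2-1 = m+1 by omega]

lemma runA_eq3 (τ : Equiv.Perm (Fin (m+3))) :
    runA (m+3) τ = 1 + ∑ i ∈ Finset.Ico 1 (m+2), chg (permWord (m+3) τ) i := by
  rw [runA_eq_sum_chg (by omega) τ, show m+3-1 = m+2 by omega]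

lemma slot_zero (hP : (p:ℕ) = 0) :
    runA (m+3) (insPerm σ p) = runA (m+2) σ +
      (if permWord (m+2) σ 1 < permWord (m+2) σ 2 then 1 else 0) := by
  rw [runA_eq3 (insPerm σ p), runA_eq2 σ]
  rw [Finset.sum_eq_sum_Ico_succ_bot (by omega : 1 < m+2)]
  have h1 : chg (permWord (m+3) (insPerm σ p)) 1
      = if permWord (m+2) σ 1 < permWord (m+2) σ 2 then 1 else 0 := by
    have := chg_atP1 σ p (by omega)
    rw [hP] at this
    simpa using this
  have h2 : ∀ i ∈ Finset.Ico 2 (m+2), chg (permWord (m+3) (insPerm σ p)) i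
      = (fun j => chg (permWord (m+2) σ) j) (i-1) := by
    intro i hi
    simp only [Finset.mem_Ico] at hi
    exact chg_high σ p (by omega)
  rw [h1, Finset.sum_congr rfl h2,
    sum_Ico_shift' (fun j => chg (permWord (m+2) σ) j) 1 (m+1) 2 (m+2) (by omega) (by omega)]
  by_cases hA : permWord (m+2) σ 1 < permWord (m+2) σ 2 <;> simp [hA] <;> omega

lemma slot_end (hP : (p:ℕ) = m+2) :
    runA (m+3) (insPerm σ p) = runA (m+2) σ +
      (if permWord (m+2) σ (m+1) < permWord (m+2) σ (m+2) then 0 else 1) := by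
  rw [runA_eq3 (insPerm σ p), runA_eq2 σ]
  rw [sum_Ico_top (fun i => chg (permWord (m+3) (insPerm σ p)) i) 1 (m+2) (m+1)
    (by omega) (by omega)]
  have h1 : chg (permWord (m+3) (insPerm σ p)) (m+1)
      = if permWord (m+2) σ (m+1) < permWord (m+2) σ (m+2) then 0 else 1 := by
    have := chg_atPm1 σ p (by omega)
    rw [hP] at this
    simpa using this
  have h2 : ∀ i ∈ Finset.Ico 1 (m+1), chg (permWord (m+3) (insPerm σ p)) i
      = chg (permWord (m+2) σ) i := by
    intro i hi
    simp only [Finset.mem_Ico] at hi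
    exact chg_low σ p (by omega)
  rw [h1, Finset.sum_congr rfl h2]
  have hS : (Finset.Ico 1 (m+1)).sum (chg (permWord (m+2) σ))
      = ∑ i ∈ Finset.Ico 1 (m+1), chg (permWord (m+2) σ) i := rfl
  omega

lemma slot_one (hm : 1 ≤ m) (hP : (p:ℕ) = 1) :
    runA (m+3) (insPerm σ p) = runA (m+2) σ +
      (if permWord (m+2) σ 1 < permWord (m+2) σ 2 then
        (if permWord (m+2) σ 2 < permWord (m+2) σ 3 then 2 else 0) else 1) := by
  rw [runA_eq3 (insPerm σ p), runA_eq2 σ]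
  rw [Finset.sum_eq_sum_Ico_succ_bot (by omega : 1 < m+2),
    Finset.sum_eq_sum_Ico_succ_bot (by omega : 1+1 < m+2)]
  have h1 : chg (permWord (m+3) (insPerm σ p)) 1 = 1 := by
    have := chg_atP σ p (by omega)
    rw [hP] at this
    exact this
  have h2 : chg (permWord (m+3) (insPerm σ p)) (1+1)
      = if permWord (m+2) σ 2 < permWord (m+2) σ 3 then 1 else 0 := by
    have := chg_atP1 σ p (by omega)
    rw [hP] at this
    simpa using this
  have h3 : ∀ i ∈ Finset.Ico (1+1+1) (m+2), chg (permWord (m+3) (insPerm σ p)) i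
      = (fun j => chg (permWord (m+2) σ) j) (i-1) := by
    intro i hi
    simp only [Finset.mem_Ico] at hi
    exact chg_high σ p (by omega)
  rw [h1, h2, Finset.sum_congr rfl h3,
    sum_Ico_shift' (fun j => chg (permWord (m+2) σ) j) 2 (m+1) (1+1+1) (m+2)
      (by omega) (by omega)]
  rw [Finset.sum_eq_sum_Ico_succ_bot (by omega : 1 < m+1)]
  have h4 : chg (permWord (m+2) σ) 1
      = if (permWord (m+2) σ 1 < permWord (m+2) σ 2) ↔
          (permWord (m+2) σ 2 < permWord (m+2) σ 3) then 0 else 1 := by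
    unfold chg; norm_num
  rw [h4]
  have hS : (∑ k ∈ Finset.Ico (1+1) (m+1), chg (permWord (m+2) σ) k)
      = ∑ i ∈ Finset.Ico 2 (m+1), chg (permWord (m+2) σ) i := by norm_num
  by_cases hA : permWord (m+2) σ 1 < permWord (m+2) σ 2 <;>
    by_cases hB : permWord (m+2) σ 2 < permWord (m+2) σ 3 <;>
      simp [hA, hB] <;> omega

lemma slot_top (hm : 1 ≤ m) (hP : (p:ℕ) = m+1) :
    runA (m+3) (insPerm σ p) = runA (m+2) σ +
      (if permWord (m+2) σ (m+1) < permWord (m+2) σ (m+2) then 1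
       else if permWord (m+2) σ m < permWord (m+2) σ (m+1) then 0 else 2) := by
  rw [runA_eq3 (insPerm σ p), runA_eq2 σ]
  rw [sum_Ico_top (fun i => chg (permWord (m+3) (insPerm σ p)) i) 1 (m+2) (m+1)
    (by omega) (by omega),
    Finset.sum_Ico_succ_top (by omega : 1 ≤ m)]
  have h1 : chg (permWord (m+3) (insPerm σ p)) (m+1) = 1 := by
    have := chg_atP σ p (by omega)
    rw [hP] at this
    exact this
  have h2 : chg (permWord (m+3) (insPerm σ p)) m
      = if permWord (m+2) σ m < permWord (m+2) σ (m+1) then 0 else 1 := by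
    have := chg_atPm1 σ p (by omega)
    rw [hP] at this
    simpa using this
  have h3 : ∀ i ∈ Finset.Ico 1 m, chg (permWord (m+3) (insPerm σ p)) i
      = chg (permWord (m+2) σ) i := by
    intro i hi
    simp only [Finset.mem_Ico] at hi
    exact chg_low σ p (by omega)
  rw [h1, h2, Finset.sum_congr rfl h3, Finset.sum_Ico_succ_top (by omega : 1 ≤ m)]
  have h4 : chg (permWord (m+2) σ) m
      = if (permWord (m+2) σ m < permWord (m+2) σ (m+1)) ↔
          (permWord (m+2) σ (m+1) < permWord (m+2) σ (m+2)) then 0 else 1 := by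
    unfold chg
    have e : m+1+1 = m+2 := by omega
    simp only [e]
  rw [h4]
  have hS : (Finset.Ico 1 m).sum (chg (permWord (m+2) σ))
      = ∑ i ∈ Finset.Ico 1 m, chg (permWord (m+2) σ) i := rfl
  by_cases hA : permWord (m+2) σ m < permWord (m+2) σ (m+1) <;>
    by_cases hB : permWord (m+2) σ (m+1) < permWord (m+2) σ (m+2) <;>
      simp [hA, hB] <;> omega

lemma slot_mid (h2 : 2 ≤ (p:ℕ)) (hm : (p:ℕ) ≤ m) :
    runA (m+3) (insPerm σ p) = runA (m+2) σ +
      (if permWord (m+2) σ (p:ℕ) < permWord (m+2) σ ((p:ℕ)+1) then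
        (if permWord (m+2) σ ((p:ℕ)+1) < permWord (m+2) σ ((p:ℕ)+2) then 2 else 0)
       else
        (if permWord (m+2) σ ((p:ℕ)-1) < permWord (m+2) σ (p:ℕ) then 0 else 2)) := by
  rw [runA_eq3 (insPerm σ p), runA_eq2 σ]
  rw [← Finset.sum_Ico_consecutive (fun i => chg (permWord (m+3) (insPerm σ p)) i)
      (by omega : 1 ≤ (p:ℕ)-1) (by omega : (p:ℕ)-1 ≤ m+2),
    ← Finset.sum_Ico_consecutive (fun i => chg (permWord (m+3) (insPerm σ p)) i)
      (by omega : (p:ℕ)-1 ≤ (p:ℕ)+2) (by omega : (p:ℕ)+2 ≤ m+2),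
    Finset.sum_eq_sum_Ico_succ_bot (by omega : (p:ℕ)-1 < (p:ℕ)+2)]
  rw [show (p:ℕ)-1+1 = (p:ℕ) by omega,
    Finset.sum_eq_sum_Ico_succ_bot (by omega : (p:ℕ) < (p:ℕ)+2),
    Finset.sum_eq_sum_Ico_succ_bot (by omega : (p:ℕ)+1 < (p:ℕ)+2),
    Finset.Ico_self, Finset.sum_empty]
  have e1 : chg (permWord (m+3) (insPerm σ p)) ((p:ℕ)-1)
      = if permWord (m+2) σ ((p:ℕ)-1) < permWord (m+2) σ (p:ℕ) then 0 else 1 :=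
    chg_atPm1 σ p (by omega)
  have e2 : chg (permWord (m+3) (insPerm σ p)) (p:ℕ) = 1 := chg_atP σ p (by omega)
  have e3 : chg (permWord (m+3) (insPerm σ p)) ((p:ℕ)+1)
      = if permWord (m+2) σ ((p:ℕ)+1) < permWord (m+2) σ ((p:ℕ)+2) then 1 else 0 :=
    chg_atP1 σ p (by omega)
  have e4 : ∀ i ∈ Finset.Ico 1 ((p:ℕ)-1), chg (permWord (m+3) (insPerm σ p)) i
      = chg (permWord (m+2) σ) i := by
    intro i hi
    simp only [Finset.mem_Ico] at hi
    exact chg_low σ p (by omega)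
  have e5 : ∀ i ∈ Finset.Ico ((p:ℕ)+2) (m+2), chg (permWord (m+3) (insPerm σ p)) i
      = (fun j => chg (permWord (m+2) σ) j) (i-1) := by
    intro i hi
    simp only [Finset.mem_Ico] at hi
    exact chg_high σ p (by omega)
  rw [e1, e2, e3, Finset.sum_congr rfl e4, Finset.sum_congr rfl e5,
    sum_Ico_shift' (fun j => chg (permWord (m+2) σ) j) ((p:ℕ)+1) (m+1) ((p:ℕ)+2) (m+2)
      (by omega) (by omega)]
  -- split RHS sum likewise
  rw [← Finset.sum_Ico_consecutive (fun i => chg (permWord (m+2) σ) i)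
      (by omega : 1 ≤ (p:ℕ)-1) (by omega : (p:ℕ)-1 ≤ m+1),
    Finset.sum_eq_sum_Ico_succ_bot (by omega : (p:ℕ)-1 < m+1)]
  rw [show (p:ℕ)-1+1 = (p:ℕ) by omega,
    Finset.sum_eq_sum_Ico_succ_bot (by omega : (p:ℕ) < m+1)]
  have f1 : chg (permWord (m+2) σ) ((p:ℕ)-1)
      = if (permWord (m+2) σ ((p:ℕ)-1) < permWord (m+2) σ (p:ℕ)) ↔
          (permWord (m+2) σ (p:ℕ) < permWord (m+2) σ ((p:ℕ)+1)) then 0 else 1 := by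
    unfold chg
    have g1 : (p:ℕ)-1+1 = (p:ℕ) := by omega
    have g2 : (p:ℕ)-1+2 = (p:ℕ)+1 := by omega
    simp only [g1, g2]
  have f2 : chg (permWord (m+2) σ) (p:ℕ)
      = if (permWord (m+2) σ (p:ℕ) < permWord (m+2) σ ((p:ℕ)+1)) ↔
          (permWord (m+2) σ ((p:ℕ)+1) < permWord (m+2) σ ((p:ℕ)+2)) then 0 else 1 := by
    unfold chg
    have g1 : (p:ℕ)+1+1 = (p:ℕ)+2 := by omega
    simp only [g1]
  rw [f1, f2]
  have hS : (Finset.Ico 1 ((p:ℕ)-1)).sum (chg (permWord (m+2) σ))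
      = ∑ i ∈ Finset.Ico 1 ((p:ℕ)-1), chg (permWord (m+2) σ) i := rfl
  have hS2 : (∑ k ∈ Finset.Ico ((p:ℕ)+1) (m+1), chg (permWord (m+2) σ) k)
      = ∑ i ∈ Finset.Ico ((p:ℕ)+1) (m+1), chg (permWord (m+2) σ) i := rfl
  have g2 : (p:ℕ)+1+1 = (p:ℕ)+2 := by omega
  try simp only [g2]
  by_cases hA : permWord (m+2) σ ((p:ℕ)-1) < permWord (m+2) σ (p:ℕ) <;>
    by_cases hB : permWord (m+2) σ (p:ℕ) < permWord (m+2) σ ((p:ℕ)+1) <;>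
      by_cases hC : permWord (m+2) σ ((p:ℕ)+1) < permWord (m+2) σ ((p:ℕ)+2) <;>
        simp [hA, hB, hC] <;> omega

lemma slot_one_m0 (hm : m = 0) (hP : (p:ℕ) = 1) :
    runA (m+3) (insPerm σ p) = runA (m+2) σ + 1 := by
  subst hm
  rw [runA_eq3 (insPerm σ p), runA_eq2 σ]
  have h1 : chg (permWord (0+3) (insPerm σ p)) 1 = 1 := by
    have := chg_atP σ p (by omega)
    rw [hP] at this
    exact this
  rw [sum_Ico_top (fun i => chg (permWord (0+3) (insPerm σ p)) i) 1 (0+2) 1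
    (by omega) (by omega)]
  have h2 : Finset.Ico 1 (0+1) = (∅ : Finset ℕ) := by decide
  rw [h2, Finset.sum_empty, h1]
  rw [show ∑ i ∈ (∅ : Finset ℕ), chg (permWord (0+2) σ) i = 0 from Finset.sum_empty]

end Slots
end DB9
namespace DB9
open Finset Polynomial

/-- "up-down" (UD) indicator at `i`. -/
def ee (W : ℕ → ℤ) (i : ℕ) : ℕ :=
  if (W i < W (i+1)) ∧ ¬ (W (i+1) < W (i+2)) then 1 else 0

/-- run-increase when inserting the new maximum at slot `q`. -/
def delt (W : ℕ → ℤ) (m q : ℕ) : ℕ :=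
  if q = 0 then (if W 1 < W 2 then 1 else 0)
  else if m = 0 then (if q = 1 then 1 else (if W 1 < W 2 then 0 else 1))
  else if q = 1 then (if W 1 < W 2 then (if W 2 < W 3 then 2 else 0) else 1)
  else if q ≤ m then (if W q < W (q+1) then (if W (q+1) < W (q+2) then 2 else 0)
                      else (if W (q-1) < W q then 0 else 2))
  else if q = m+1 then (if W (m+1) < W (m+2) then 1 else (if W m < W (m+1) then 0 else 2))
  else (if W (m+1) < W (m+2) then 0 else 1)

lemma delt_le (W : ℕ → ℤ) (m q : ℕ) : delt W m q ≤ 2 := by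
  unfold delt; split_ifs <;> omega

lemma telescope (W : ℕ → ℤ) (k : ℕ) :
    (if W 1 < W 2 then 0 else 1) + (if W (k+1) < W (k+2) then 1 else 0)
      + 2 * (∑ i ∈ Finset.Ico 1 (k+1), ee W i)
    = 1 + ∑ i ∈ Finset.Ico 1 (k+1), chg W i := by
  induction k with
  | zero =>
    rw [Finset.Ico_self, Finset.sum_empty, Finset.sum_empty]
    by_cases h : W 1 < W 2 <;> simp [h]
  | succ k ih =>
    rw [Finset.sum_Ico_succ_top (by omega : 1 ≤ k+1), Finset.sum_Ico_succ_top (by omega : 1 ≤ k+1)]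
    have point : chg W (k+1) + (if W (k+1) < W (k+2) then 1 else 0)
        = (if W (k+1+1) < W (k+1+1+1) then 1 else 0) + 2 * ee W (k+1) := by
      unfold ee chg
      have g1 : k+1+1 = k+2 := by omega
      have g2 : k+1+2 = k+3 := by omega
      have g3 : k+2+1 = k+3 := by omega
      simp only [g1, g2, g3]
      by_cases hA : W (k+1) < W (k+2) <;> by_cases hB : W (k+2) < W (k+3) <;>
        simp [hA, hB]
    have g1 : k+1+1 = k+2 := by omega
    have g2 : k+1+2 = k+3 := by omega
    simp only [g1, g2] at point ⊢
    omega

section Count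
variable {m : ℕ} (σ : Equiv.Perm (Fin (m+2)))

lemma runA_le2 : runA (m+2) σ ≤ m + 1 := by
  rw [runA_eq2 σ]
  have h : ∑ i ∈ Finset.Ico 1 (m+1), chg (permWord (m+2) σ) i
      ≤ ∑ _i ∈ Finset.Ico 1 (m+1), 1 := by
    apply Finset.sum_le_sum
    intro i _
    unfold chg
    split_ifs <;> omega
  rw [Finset.sum_const, Nat.card_Ico, smul_eq_mul, mul_one] at h
  omega

lemma hval (p : Fin (m+3)) :
    runA (m+3) (insPerm σ p)
      = runA (m+2) σ + delt (permWord (m+2) σ) m (p:ℕ) := by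
  have hq : (p:ℕ) < m + 3 := p.isLt
  unfold delt
  by_cases h0 : (p:ℕ) = 0
  · rw [if_pos h0]; exact slot_zero σ p h0
  · rw [if_neg h0]
    by_cases hm0 : m = 0
    · rw [if_pos hm0]
      by_cases h1 : (p:ℕ) = 1
      · rw [if_pos h1]
        subst hm0
        exact slot_one_m0 σ p rfl h1
      · rw [if_neg h1]
        subst hm0
        have := slot_end σ p (by omega)
        simpa using this
    · rw [if_neg hm0]
      by_cases h1 : (p:ℕ) = 1
      · rw [if_pos h1]; exact slot_one σ p (by omega) h1
      · rw [if_neg h1]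
        by_cases h2 : (p:ℕ) ≤ m
        · rw [if_pos h2]; exact slot_mid σ p (by omega) h2
        · rw [if_neg h2]
          by_cases h3 : (p:ℕ) = m+1
          · rw [if_pos h3]
            exact slot_top σ p (by omega) h3
          · rw [if_neg h3]
            exact slot_end σ p (by omega)

lemma delt_at0 (W : ℕ → ℤ) (m : ℕ) : delt W m 0 = (if W 1 < W 2 then 1 else 0) := by
  unfold delt; rw [if_pos rfl]

lemma delt_at1 (W : ℕ → ℤ) {m : ℕ} (hm : 1 ≤ m) :
    delt W m 1 = (if W 1 < W 2 then (if W 2 < W 3 then 2 else 0) else 1) := by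
  unfold delt; rw [if_neg (by omega), if_neg (by omega), if_pos rfl]

lemma delt_atm1 (W : ℕ → ℤ) {m : ℕ} (hm : 1 ≤ m) :
    delt W m (m+1)
      = (if W (m+1) < W (m+2) then 1 else (if W m < W (m+1) then 0 else 2)) := by
  unfold delt
  rw [if_neg (by omega), if_neg (by omega), if_neg (by omega), if_neg (by omega), if_pos rfl]

lemma delt_atm2 (W : ℕ → ℤ) {m : ℕ} (hm : 1 ≤ m) :
    delt W m (m+2) = (if W (m+1) < W (m+2) then 0 else 1) := by
  unfold delt
  rw [if_neg (by omega), if_neg (by omega), if_neg (by omega), if_neg (by omega),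
    if_neg (by omega)]

lemma delt_mid' (W : ℕ → ℤ) {m q : ℕ} (h2 : 2 ≤ q) (hq : q ≤ m) :
    delt W m q = (if W q < W (q+1) then (if W (q+1) < W (q+2) then 2 else 0)
      else (if W (q-1) < W q then 0 else 2)) := by
  unfold delt
  rw [if_neg (by omega), if_neg (by omega), if_neg (by omega), if_pos hq]

lemma delt_at1_m0 (W : ℕ → ℤ) : delt W 0 1 = 1 := by
  unfold delt; rw [if_neg (by omega), if_pos rfl, if_pos rfl]

lemma delt_at2_m0 (W : ℕ → ℤ) : delt W 0 2 = (if W 1 < W 2 then 0 else 1) := by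
  unfold delt; rw [if_neg (by omega), if_pos rfl, if_neg (by omega)]

lemma count1 :
    ((Finset.range (m+3)).filter
      (fun q => delt (permWord (m+2) σ) m q = 1)).card = 2 := by
  set W := permWord (m+2) σ with hW
  rw [Finset.card_filter, Finset.range_eq_Ico]
  by_cases hm0 : m = 0
  · subst hm0
    rw [Finset.sum_eq_sum_Ico_succ_bot (by omega : 0 < 0+3),
      Finset.sum_eq_sum_Ico_succ_bot (by omega : 0+1 < 0+3),
      Finset.sum_eq_sum_Ico_succ_bot (by omega : 0+1+1 < 0+3),
      show Finset.Ico (0+1+1+1) (0+3) = ∅ by decide, Finset.sum_empty,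
      delt_at0, show (0:ℕ)+1 = 1 by omega, show (0:ℕ)+1+1 = 2 by omega,
      delt_at1_m0, delt_at2_m0]
    by_cases hA : W 1 < W 2 <;> simp [hA]
  · have hm : 1 ≤ m := by omega
    rw [Finset.sum_eq_sum_Ico_succ_bot (by omega : 0 < m+3),
      Finset.sum_eq_sum_Ico_succ_bot (by omega : 0+1 < m+3),
      sum_Ico_top _ (0+1+1) (m+3) (m+2) (by omega) (by omega),
      sum_Ico_top _ (0+1+1) (m+2) (m+1) (by omega) (by omega)]
    have hint : ∀ q ∈ Finset.Ico (0+1+1) (m+1),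
        (if delt W m q = 1 then 1 else 0) = 0 := by
      intro q hq
      simp only [Finset.mem_Ico] at hq
      rw [delt_mid' W (by omega) (by omega)]
      by_cases hA : W q < W (q+1) <;> by_cases hB : W (q+1) < W (q+2) <;>
        by_cases hC : W (q-1) < W q <;> simp [hA, hB, hC]
    rw [Finset.sum_congr rfl hint, Finset.sum_const, smul_eq_mul, mul_zero]
    rw [delt_at0, show (0:ℕ)+1 = 1 by omega, delt_at1 W hm, delt_atm1 W hm, delt_atm2 W hm]
    by_cases hA : W 1 < W 2 <;> by_cases hB : W (m+1) < W (m+2) <;>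
      by_cases hC : W 2 < W 3 <;> by_cases hD : W m < W (m+1) <;>
        simp [hA, hB, hC, hD]

lemma count0 :
    ((Finset.range (m+3)).filter
      (fun q => delt (permWord (m+2) σ) m q = 0)).card = runA (m+2) σ := by
  set W := permWord (m+2) σ with hW
  rw [Finset.card_filter, Finset.range_eq_Ico, runA_eq2 σ, ← hW]
  by_cases hm0 : m = 0
  · subst hm0
    rw [Finset.sum_eq_sum_Ico_succ_bot (by omega : 0 < 0+3),
      Finset.sum_eq_sum_Ico_succ_bot (by omega : 0+1 < 0+3),
      Finset.sum_eq_sum_Ico_succ_bot (by omega : 0+1+1 < 0+3),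
      show Finset.Ico (0+1+1+1) (0+3) = ∅ by decide, Finset.sum_empty,
      delt_at0, show (0:ℕ)+1 = 1 by omega, show (0:ℕ)+1+1 = 2 by omega,
      delt_at1_m0, delt_at2_m0,
      show Finset.Ico 1 (0+1) = ∅ by decide, Finset.sum_empty]
    by_cases hA : W 1 < W 2 <;> simp [hA]
  · have hm : 1 ≤ m := by omega
    rw [Finset.sum_eq_sum_Ico_succ_bot (by omega : 0 < m+3),
      Finset.sum_eq_sum_Ico_succ_bot (by omega : 0+1 < m+3),
      sum_Ico_top _ (0+1+1) (m+3) (m+2) (by omega) (by omega),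
      sum_Ico_top _ (0+1+1) (m+2) (m+1) (by omega) (by omega)]
    have hint : ∀ q ∈ Finset.Ico (0+1+1) (m+1),
        (if delt W m q = 0 then 1 else 0) = (fun i => ee W (i-1) + ee W i) q := by
      intro q hq
      simp only [Finset.mem_Ico] at hq
      simp only []
      rw [delt_mid' W (by omega) (by omega)]
      unfold ee
      have g1 : q-1+1 = q := by omega
      have g2 : q-1+2 = q+1 := by omega
      simp only [g1, g2]
      by_cases hA : W (q-1) < W q <;> by_cases hB : W q < W (q+1) <;>
        by_cases hC : W (q+1) < W (q+2) <;> simp [hA, hB, hC]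
    rw [Finset.sum_congr rfl hint]
    have hsplit : ∑ q ∈ Finset.Ico (0+1+1) (m+1), (fun i => ee W (i-1) + ee W i) q
        = (∑ q ∈ Finset.Ico (0+1+1) (m+1), (fun i => ee W i) (q-1))
          + ∑ q ∈ Finset.Ico (0+1+1) (m+1), ee W q := by
      rw [← Finset.sum_add_distrib]
    rw [hsplit, sum_Ico_shift' (fun i => ee W i) (0+1) m (0+1+1) (m+1) (by omega) (by omega)]
    -- now: χ(¬U1) + e1-from-delt-at-1 ... put everything together with the telescope identity
    rw [delt_at0, show (0:ℕ)+1 = 1 by omega, delt_at1 W hm, delt_atm1 W hm, delt_atm2 W hm]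
    have htel := telescope W m
    have hA0 : (if (if W 1 < W 2 then 1 else 0) = 0 then 1 else 0)
        = (if W 1 < W 2 then 0 else 1) := by
      by_cases hA : W 1 < W 2 <;> simp [hA]
    have hA1 : (if (if W 1 < W 2 then (if W 2 < W 3 then 2 else 0) else 1) = 0 then 1 else 0)
        = ee W 1 := by
      unfold ee
      have g1 : (1:ℕ)+1 = 2 := by omega
      have g2 : (1:ℕ)+2 = 3 := by omega
      simp only [g1, g2]
      by_cases hA : W 1 < W 2 <;> by_cases hB : W 2 < W 3 <;> simp [hA, hB]
    have hAtop : (if (if W (m+1) < W (m+2) then 1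
          else (if W m < W (m+1) then 0 else 2)) = 0 then 1 else 0)
        = ee W m := by
      unfold ee
      by_cases hA : W (m+1) < W (m+2) <;> by_cases hB : W m < W (m+1) <;> simp [hA, hB]
    have hAend : (if (if W (m+1) < W (m+2) then 0 else 1) = 0 then 1 else 0)
        = (if W (m+1) < W (m+2) then 1 else 0) := by
      by_cases hA : W (m+1) < W (m+2) <;> simp [hA]
    have hE2 : (∑ q ∈ Finset.Ico 1 m, ee W q) + ee W m
        = ∑ q ∈ Finset.Ico 1 (m+1), ee W q :=
      (Finset.sum_Ico_succ_top (by omega : 1 ≤ m) _).symm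
    have hE1 : ee W 1 + ∑ q ∈ Finset.Ico (1+1) (m+1), ee W q
        = ∑ q ∈ Finset.Ico 1 (m+1), ee W q :=
      (Finset.sum_eq_sum_Ico_succ_bot (by omega : 1 < m+1) _).symm
    omega

end Count
end DB9
namespace DB9
open Finset Polynomial

section Dist
variable {m : ℕ} (σ : Equiv.Perm (Fin (m+2)))

lemma count_sum (f : ℕ → Polynomial ℝ) :
    ∑ p : Fin (m+3), f (runA (m+3) (insPerm σ p))
      = (runA (m+2) σ) • f (runA (m+2) σ) + 2 • f (runA (m+2) σ + 1)
        + (m + 1 - runA (m+2) σ) • f (runA (m+2) σ + 2) := by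
  have step1 : ∑ p : Fin (m+3), f (runA (m+3) (insPerm σ p))
      = ∑ q ∈ Finset.range (m+3), f (runA (m+2) σ + delt (permWord (m+2) σ) m q) := by
    rw [Finset.sum_congr rfl (fun p _ => by rw [hval σ p])]
    exact Fin.sum_univ_eq_sum_range
      (fun q => f (runA (m+2) σ + delt (permWord (m+2) σ) m q)) (m+3)
  rw [step1]
  have point : ∀ q ∈ Finset.range (m+3),
      f (runA (m+2) σ + delt (permWord (m+2) σ) m q)
      = (if delt (permWord (m+2) σ) m q = 0 then f (runA (m+2) σ)
         else (if delt (permWord (m+2) σ) m q = 1 then f (runA (m+2) σ + 1)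
           else f (runA (m+2) σ + 2))) := by
    intro q _
    have h := delt_le (permWord (m+2) σ) m q
    rcases (by omega : delt (permWord (m+2) σ) m q = 0 ∨ delt (permWord (m+2) σ) m q = 1
        ∨ delt (permWord (m+2) σ) m q = 2) with h0 | h0 | h0 <;> rw [h0] <;> simp
  rw [Finset.sum_congr rfl point, Finset.sum_ite, Finset.sum_ite,
    Finset.sum_const, Finset.sum_const, Finset.sum_const]
  rw [count0 σ]
  have hfilter1 : (((Finset.range (m+3)).filter
        (fun q => ¬ delt (permWord (m+2) σ) m q = 0)).filter
          (fun q => delt (permWord (m+2) σ) m q = 1))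
      = (Finset.range (m+3)).filter (fun q => delt (permWord (m+2) σ) m q = 1) := by
    rw [Finset.filter_filter]
    apply Finset.filter_congr
    intro q _
    constructor
    · exact fun h => h.2
    · exact fun h => ⟨by omega, h⟩
  have hcard2 : (((Finset.range (m+3)).filter
        (fun q => ¬ delt (permWord (m+2) σ) m q = 0)).filter
          (fun q => ¬ delt (permWord (m+2) σ) m q = 1)).card = m + 1 - runA (m+2) σ := by
    have t1 := Finset.card_filter_add_card_filter_not
      (s := Finset.range (m+3)) (p := fun q => delt (permWord (m+2) σ) m q = 0)
    have t2 := Finset.card_filter_add_card_filter_not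
      (s := (Finset.range (m+3)).filter (fun q => ¬ delt (permWord (m+2) σ) m q = 0))
      (p := fun q => delt (permWord (m+2) σ) m q = 1)
    rw [hfilter1, count1 σ] at t2
    rw [count0 σ, Finset.card_range] at t1
    have hr := runA_le2 σ
    omega
  rw [hfilter1, count1 σ, hcard2]
  abel

end Dist

/-- The transformed run polynomial `S_n = ∑_σ (2X)^{run σ} (1+X²)^{n-1-run σ}`. -/
noncomputable def SP (n : ℕ) : Polynomial ℝ :=
  ∑ σ : Equiv.Perm (Fin n), (2*X)^(runA n σ) * (1+X^2)^(n-1-runA n σ)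

lemma runA_pos (n : ℕ) (σ : Equiv.Perm (Fin n)) : 1 ≤ runA n σ := Nat.le_add_right 1 _

lemma star (m r : ℕ) (hr1 : 1 ≤ r) (hr2 : r ≤ m+1) :
    r • ((2*X:Polynomial ℝ)^r * (1+X^2)^(m+2-r))
      + 2 • ((2*X:Polynomial ℝ)^(r+1) * (1+X^2)^(m+2-(r+1)))
      + (m+1-r) • ((2*X:Polynomial ℝ)^(r+2) * (1+X^2)^(m+2-(r+2)))
    = X*(1-X^2) * derivative ((2*X:Polynomial ℝ)^r * (1+X^2)^(m+1-r))
      + (4*X + 2*((m:Polynomial ℝ)+1)*X^2) * ((2*X)^r * (1+X^2)^(m+1-r)) := by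
  obtain ⟨a, rfl⟩ : ∃ a, r = a+1 := ⟨r-1, by omega⟩
  by_cases htop : a+1 = m+1
  · have hma : m = a := by omega
    subst hma
    rw [show m+2-(m+1) = 1 by omega, show m+2-(m+1+1) = 0 by omega,
      show m+1-(m+1) = 0 by omega, show m+2-(m+1+2) = 0 by omega]
    simp only [pow_zero, mul_one, zero_smul, add_zero]
    rw [derivative_pow, derivative_mul, derivative_X, derivative_ofNat]
    simp only [Nat.add_sub_cancel, Nat.cast_add, Nat.cast_one, mul_one, zero_mul, zero_add,
      map_add, map_one, Polynomial.C_eq_natCast]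
    rw [nsmul_eq_mul, nsmul_eq_mul]
    push_cast
    ring
  · obtain ⟨j, rfl⟩ : ∃ j, m = a + 1 + j := ⟨m - a - 1, by omega⟩
    rw [show a+1+j+2-(a+1) = j+2 by omega, show a+1+j+2-(a+1+1) = j+1 by omega,
      show a+1+j+2-(a+1+2) = j by omega, show a+1+j+1-(a+1) = j+1 by omega]
    rw [derivative_mul, derivative_pow, derivative_pow, derivative_mul, derivative_X,
      derivative_ofNat, derivative_add, derivative_one, derivative_pow, derivative_X]
    simp only [Nat.add_sub_cancel, mul_one, zero_mul, zero_add,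
      map_add, map_one, map_ofNat, Polynomial.C_eq_natCast]
    rw [nsmul_eq_mul, nsmul_eq_mul, nsmul_eq_mul]
    push_cast
    ring

lemma SP_rec (m : ℕ) :
    SP (m+3) = X*(1-X^2) * derivative (SP (m+2))
      + (4*X + 2*((m:Polynomial ℝ)+1)*X^2) * SP (m+2) := by
  unfold SP
  rw [← Function.Bijective.sum_comp insPerm_bij
    (fun τ => (2*X:Polynomial ℝ)^(runA (m+3) τ) * (1+X^2)^(m+3-1-runA (m+3) τ))]
  rw [Fintype.sum_prod_type]
  simp only [show m+3-1 = m+2 by omega, show m+2-1 = m+1 by omega]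
  rw [derivative_sum, Finset.mul_sum, Finset.mul_sum, ← Finset.sum_add_distrib]
  apply Finset.sum_congr rfl
  intro σ _
  have hc := count_sum σ (fun s => (2*X:Polynomial ℝ)^s * (1+X^2)^(m+2-s))
  rw [hc]
  exact star m (runA (m+2) σ) (runA_pos _ σ) (runA_le2 σ)

lemma perm2_univ : (Finset.univ : Finset (Equiv.Perm (Fin 2)))
    = {1, Equiv.swap 0 1} := by decide

lemma main_poly (m : ℕ) :
    (1+X) * SP (m+2) = 4 * (1+X)^m * AP (m+2) := by
  induction m with
  | zero =>
    unfold SP AP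
    rw [perm2_univ]
    rw [Finset.sum_insert (by decide), Finset.sum_singleton,
      Finset.sum_insert (by decide), Finset.sum_singleton]
    rw [show runA 2 (1 : Equiv.Perm (Fin 2)) = 1 by decide,
      show runA 2 (Equiv.swap (0 : Fin 2) 1) = 1 by decide,
      show desA 2 (1 : Equiv.Perm (Fin 2)) = 0 by decide,
      show desA 2 (Equiv.swap (0 : Fin 2) 1) = 1 by decide]
    norm_num
    ring
  | succ k ih =>
    have h1b : (1+X)^2 * SP (k+2) = 4 * (1+X)^(k+1) * AP (k+2) := by
      linear_combination (1+X) * ih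
    have h2 := congrArg derivative h1b
    rw [derivative_mul, derivative_mul, derivative_mul, derivative_pow, derivative_pow,
      derivative_add, derivative_one, derivative_X, derivative_ofNat] at h2
    simp only [Nat.add_sub_cancel, mul_one, zero_mul, zero_add, add_zero,
      map_add, map_one, map_ofNat, Polynomial.C_eq_natCast] at h2
    have hAP := AP_rec (n := k+2) (by omega)
    have hSP := SP_rec k
    simp only [show k+2+1 = k+3 by omega] at hAP
    simp only [show k+1+2 = k+3 by omega]
    rw [hSP, hAP]
    push_cast at h2 hAP ⊢
    linear_combination (X*(1-X)) * h2 + (2*X + (2*(k:Polynomial ℝ)+4)*X^2) * ih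

end DB9
set_option maxHeartbeats 2000000 in
/-- David–Barton: For `n ≥ 2` and real `−1 < x ≤ 1`, with
`w = √((1−x)/(1+x))`,
`R_n(x) = ((1+x)/2)^{n−1} (1+w)^{n+1} A_n((1−w)/(1+w))`. -/
theorem statement9 (n : ℕ) (hn : 2 ≤ n) (x : ℝ) (hx1 : -1 < x) (hx2 : x ≤ 1) :
    runPolyReal n x =
      ((1 + x) / 2) ^ (n - 1) * (1 + Real.sqrt ((1 - x) / (1 + x))) ^ (n + 1) *
        eulerianAReal n
          ((1 - Real.sqrt ((1 - x) / (1 + x))) / (1 + Real.sqrt ((1 - x) / (1 + x)))) := by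
  obtain ⟨k, rfl⟩ : ∃ k, n = k + 2 := ⟨n - 2, by omega⟩
  have hx1' : (0:ℝ) < 1 + x := by linarith
  set w := Real.sqrt ((1 - x) / (1 + x)) with hw
  have hqnn : (0:ℝ) ≤ (1 - x) / (1 + x) := div_nonneg (by linarith) (by linarith)
  have hw0 : 0 ≤ w := Real.sqrt_nonneg _
  have hw2 : w^2 = (1 - x) / (1 + x) := Real.sq_sqrt hqnn
  have hw2' : w^2 * (1 + x) = 1 - x := by rw [hw2]; field_simp
  set t := (1 - w) / (1 + w) with ht
  have hw1 : (0:ℝ) < 1 + w := by linarith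
  have h1t : (1 + t) * (1 + w) = 2 := by rw [ht]; field_simp; ring
  have ht1 : (0:ℝ) < 1 + t := by nlinarith
  have hxw : x * (1 + w^2) = 1 - w^2 := by nlinarith
  have htw : t * (1 + w) = 1 - w := by rw [ht]; field_simp
  have e1 : t^2 * (1 + w)^2 = (1 - w)^2 := by nlinarith [htw]
  have key : x * (1 + t^2) * (1 + w)^2 = 2*t * (1 + w)^2 := by nlinarith [e1, hxw, htw]
  have hxt : x * (1 + t^2) = 2*t :=
    mul_right_cancel₀ (pow_ne_zero 2 (ne_of_gt hw1)) key
  -- evaluate the polynomial identity at t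
  have hmain := congrArg (Polynomial.eval t) (DB9.main_poly k)
  simp only [DB9.SP, DB9.AP, Polynomial.eval_mul, Polynomial.eval_add, Polynomial.eval_pow,
    Polynomial.eval_one, Polynomial.eval_X, Polynomial.eval_ofNat,
    Polynomial.eval_finset_sum] at hmain
  have hsum1 : ∑ σ : Equiv.Perm (Fin (k+2)),
        (2*t)^(runA (k+2) σ) * (1+t^2)^(k+2-1-runA (k+2) σ)
      = (1+t^2)^(k+1) * runPolyReal (k+2) x := by
    unfold runPolyReal
    rw [Finset.mul_sum]
    apply Finset.sum_congr rfl
    intro σ _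
    have hr2 := DB9.runA_le2 (m := k) σ
    rw [show (2:ℝ)*t = x*(1+t^2) by linarith [hxt], mul_pow,
      show k+2-1 = k+1 by omega, mul_assoc, ← pow_add,
      show runA (k+2) σ + (k+1-runA (k+2) σ) = k+1 by omega]
    ring
  rw [hsum1] at hmain
  have hsum2 : (∑ σ : Equiv.Perm (Fin (k+2)), t^(desA (k+2) σ + 1))
      = eulerianAReal (k+2) t := rfl
  rw [hsum2] at hmain
  -- the coefficient identity
  have h1px : (1+x)*(1+t^2) = (1+t)^2 := by nlinarith [hxt]
  have hw_t : 1+w = 2/(1+t) := by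
    rw [eq_div_iff (ne_of_gt ht1)]
    nlinarith [h1t]
  have hcoef : ((1+x)/2)^(k+1) * (1+w)^(k+3) * ((1+t) * (1+t^2)^(k+1)) = 4*(1+t)^k := by
    calc ((1+x)/2)^(k+1) * (1+w)^(k+3) * ((1+t) * (1+t^2)^(k+1))
        = (((1+x)/2) * (1+t^2))^(k+1) * (1+w)^(k+3) * (1+t) := by
          rw [mul_pow]; ring
      _ = ((1+t)^2/2)^(k+1) * (2/(1+t))^(k+3) * (1+t) := by
          rw [div_mul_eq_mul_div, h1px, hw_t]
      _ = 4*(1+t)^k := by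
          rw [div_pow, div_pow]
          rw [div_mul_div_comm, div_mul_eq_mul_div]
          rw [div_eq_iff (by positivity)]
          rw [← pow_mul]
          ring_nf
  -- finish
  rw [show k+2-1 = k+1 by omega, show k+2+1 = k+3 by omega]
  have hne : ((1+t) * (1+t^2)^(k+1) : ℝ) ≠ 0 :=
    ne_of_gt (mul_pos ht1 (pow_pos (by positivity) _))
  apply mul_left_cancel₀ hne
  calc (1+t) * (1+t^2)^(k+1) * runPolyReal (k+2) x
      = 4*(1+t)^k * eulerianAReal (k+2) t := by rw [← hmain]; ring
    _ = (1+t) * (1+t^2)^(k+1)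
        * (((1+x)/2)^(k+1) * (1+w)^(k+3) * eulerianAReal (k+2) t) := by
          rw [← hcoef]; ring
end

section
/- For every n ≥ 1, the polynomial (1+x)^{⌊(n−1)/2⌋} divides each of the six polynomials R_n^{B,>}(x), R_n^{B,<}(x), R_n^B(x), R_n^{D,>}(x), R_n^{D,<}(x), and R_n^D(x) in ℤ[x]. -/
open Finset Polynomial

/-! ### Auxiliary development for statement 11 -/

namespace S11

/-! #### Pure logic/arithmetic helpers -/

lemma xorI {j c : ℕ} (h : j = c) (B : Prop) : Xor' (j = c) B ↔ ¬B := by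
  simp [Xor', h]

lemma xorN {j c : ℕ} (h : j ≠ c) (B : Prop) : Xor' (j = c) B ↔ B := by
  simp [Xor', h]

lemma xor_assoc_or {A B C : Prop} (h : ¬(A ∧ B)) :
    (Xor' A (Xor' B C) ↔ Xor' (A ∨ B) C) := by
  unfold Xor' Xor; tauto

lemma helper1 (f b d : ℤ) (hab : f ≠ b) (h : |b| < |d|) :
    (((f < b ∧ -d < b) ∨ (b < f ∧ b < -d)) ↔ ¬((f < b ∧ d < b) ∨ (b < f ∧ b < d))) := by
  rcases abs_cases b with ⟨e1, s1⟩ | ⟨e1, s1⟩ <;> rcases abs_cases d with ⟨e2, s2⟩ | ⟨e2, s2⟩ <;>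
    rw [e1, e2] at h <;> omega

lemma helper2 (f b d : ℤ) (h : |d| < |b|) :
    (((f < b ∧ -d < b) ∨ (b < f ∧ b < -d)) ↔ ((f < b ∧ d < b) ∨ (b < f ∧ b < d))) := by
  rcases abs_cases b with ⟨e1, s1⟩ | ⟨e1, s1⟩ <;> rcases abs_cases d with ⟨e2, s2⟩ | ⟨e2, s2⟩ <;>
    rw [e1, e2] at h <;> omega

lemma helper3 (a b d : ℤ) (hbd : b ≠ d) (h : |b| < |a|) :
    (((a < -b ∧ -d < -b) ∨ (-b < a ∧ -b < -d)) ↔ ¬((a < b ∧ d < b) ∨ (b < a ∧ b < d))) := by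
  rcases abs_cases a with ⟨e1, s1⟩ | ⟨e1, s1⟩ <;> rcases abs_cases b with ⟨e2, s2⟩ | ⟨e2, s2⟩ <;>
    rw [e1, e2] at h <;> omega

lemma helper4 (a b d : ℤ) (h : |a| < |b|) :
    (((a < -b ∧ -d < -b) ∨ (-b < a ∧ -b < -d)) ↔ ((a < b ∧ d < b) ∨ (b < a ∧ b < d))) := by
  rcases abs_cases a with ⟨e1, s1⟩ | ⟨e1, s1⟩ <;> rcases abs_cases b with ⟨e2, s2⟩ | ⟨e2, s2⟩ <;>
    rw [e1, e2] at h <;> omega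

/-! #### Basic facts about `signedWord` -/

lemma signedWord_eq_zero (n : ℕ) (π : SignedPerm n) (j : ℕ) (h : ¬(1 ≤ j ∧ j ≤ n)) :
    signedWord n π j = 0 := by
  simp [signedWord, h]

lemma abs_signedWord (n : ℕ) (π : SignedPerm n) (j : ℕ) (h1 : 1 ≤ j) (h2 : j ≤ n) :
    |signedWord n π j| = ((π.1 ⟨j - 1, by omega⟩ : ℕ) : ℤ) + 1 := by
  simp only [signedWord, dif_pos (show 1 ≤ j ∧ j ≤ n from ⟨h1, h2⟩)]
  split_ifs
  · rw [abs_neg]; exact abs_of_nonneg (by positivity)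
  · exact abs_of_nonneg (by positivity)

lemma abs_signedWord_ne (n : ℕ) (π : SignedPerm n) {j₁ j₂ : ℕ}
    (ha1 : 1 ≤ j₁) (ha2 : j₁ ≤ n) (hb1 : 1 ≤ j₂) (hb2 : j₂ ≤ n) (hne : j₁ ≠ j₂) :
    |signedWord n π j₁| ≠ |signedWord n π j₂| := by
  rw [abs_signedWord n π j₁ ha1 ha2, abs_signedWord n π j₂ hb1 hb2]
  intro h
  have h3 : ((π.1 ⟨j₁ - 1, by omega⟩ : Fin n) : ℕ) = ((π.1 ⟨j₂ - 1, by omega⟩ : Fin n) : ℕ) := by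
    exact_mod_cast add_right_cancel h
  have h4 := π.1.injective (Fin.val_injective h3)
  have h5 := Fin.mk.inj_iff.mp h4
  omega

lemma signedWord_ne (n : ℕ) (π : SignedPerm n) {j₁ j₂ : ℕ}
    (ha2 : j₁ ≤ n) (hb2 : j₂ ≤ n) (hne : j₁ ≠ j₂) :
    signedWord n π j₁ ≠ signedWord n π j₂ := by
  have pos : ∀ j, 1 ≤ j → j ≤ n → signedWord n π j ≠ 0 := by
    intro j u1 u2 h0
    have := abs_signedWord n π j u1 u2
    rw [h0] at this
    simp only [abs_zero] at this
    have h2 : (0:ℤ) ≤ ((π.1 ⟨j - 1, by omega⟩ : Fin n) : ℕ) := by positivity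
    omega
  by_cases ha1 : 1 ≤ j₁ <;> by_cases hb1 : 1 ≤ j₂
  · intro h
    exact abs_signedWord_ne n π ha1 ha2 hb1 hb2 hne (by rw [h])
  · rw [signedWord_eq_zero n π j₂ (by omega)]
    exact pos j₁ ha1 ha2
  · rw [signedWord_eq_zero n π j₁ (by omega)]
    exact fun h => pos j₂ hb1 hb2 h.symm
  · omega

/-! #### Suffix negation -/

/-- Negate the suffix of a signed permutation starting at (1-based) position `i`. -/
def negSuf (n : ℕ) (i : ℕ) (π : SignedPerm n) : SignedPerm n :=
  (π.1, fun p => if i ≤ (p : ℕ) + 1 then !(π.2 p) else π.2 p)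

lemma signedWord_negSuf (n i : ℕ) (π : SignedPerm n) (j : ℕ) :
    signedWord n (negSuf n i π) j =
      if i ≤ j then -signedWord n π j else signedWord n π j := by
  by_cases h : 1 ≤ j ∧ j ≤ n
  · simp only [signedWord, negSuf, dif_pos h]
    have e : (j - 1) + 1 = j := by omega
    by_cases hij : i ≤ j
    · rw [if_pos hij]
      have hc : i ≤ ((⟨j - 1, by omega⟩ : Fin n) : ℕ) + 1 := by
        simp only [Fin.val_mk]; omega
      simp only [show i ≤ j - 1 + 1 by omega, ↓reduceIte]
      cases π.2 ⟨j - 1, by omega⟩ <;> simp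
    · rw [if_neg hij]
      have hc : ¬ i ≤ ((⟨j - 1, by omega⟩ : Fin n) : ℕ) + 1 := by
        simp only [Fin.val_mk]; omega
      simp only [show ¬ i ≤ j - 1 + 1 by omega, ↓reduceIte]
  · rw [signedWord_eq_zero n _ j h, signedWord_eq_zero n π j h]
    split <;> simp

lemma abs_signedWord_eq_of_fst (n : ℕ) (π π' : SignedPerm n) (h : π.1 = π'.1) (j : ℕ) :
    |signedWord n π j| = |signedWord n π' j| := by
  by_cases hj : 1 ≤ j ∧ j ≤ n
  · rw [abs_signedWord n π j hj.1 hj.2, abs_signedWord n π' j hj.1 hj.2, h]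
  · rw [signedWord_eq_zero n π j hj, signedWord_eq_zero n π' j hj]

/-- The index of the unique direction-change indicator toggled by `negSuf i`. -/
def cpos (n i : ℕ) (π : SignedPerm n) : ℕ :=
  if |signedWord n π (i - 1)| < |signedWord n π i| then i - 1 else i

lemma cpos_range (n i : ℕ) (π : SignedPerm n) :
    i - 1 ≤ cpos n i π ∧ cpos n i π ≤ i := by
  unfold cpos; split <;> omega

lemma cpos_eq_of_fst (n i : ℕ) (π π' : SignedPerm n) (h : π.1 = π'.1) :
    cpos n i π = cpos n i π' := by
  unfold cpos
  rw [abs_signedWord_eq_of_fst n π π' h, abs_signedWord_eq_of_fst n π π' h]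

/-- Key lemma: `negSuf i` toggles the direction-change indicator exactly at `cpos i`. -/
lemma changes_negSuf (n i : ℕ) (π : SignedPerm n) (hi2 : 2 ≤ i) (hin : i + 1 ≤ n)
    (j : ℕ) (hj1 : 1 ≤ j) (hjn : j ≤ n - 1) :
    (changesDir (signedWord n (negSuf n i π)) j ↔
      Xor' (j = cpos n i π) (changesDir (signedWord n π) j)) := by
  have hcr := cpos_range n i π
  unfold changesDir
  by_cases hA : j + 1 < i
  · have v1 : signedWord n (negSuf n i π) (j - 1) = signedWord n π (j - 1) := by
      rw [signedWord_negSuf]; exact if_neg (by omega)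
    have v2 : signedWord n (negSuf n i π) j = signedWord n π j := by
      rw [signedWord_negSuf]; exact if_neg (by omega)
    have v3 : signedWord n (negSuf n i π) (j + 1) = signedWord n π (j + 1) := by
      rw [signedWord_negSuf]; exact if_neg (by omega)
    rw [v1, v2, v3, xorN (show j ≠ cpos n i π by omega)]
  · by_cases hB : j = i - 1
    · subst hB
      rw [show i - 1 + 1 = i from by omega]
      have v1 : signedWord n (negSuf n i π) (i - 1 - 1) = signedWord n π (i - 1 - 1) := by
        rw [signedWord_negSuf]; exact if_neg (by omega)
      have v2 : signedWord n (negSuf n i π) (i - 1) = signedWord n π (i - 1) := by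
        rw [signedWord_negSuf]; exact if_neg (by omega)
      have v3 : signedWord n (negSuf n i π) i = -signedWord n π i := by
        rw [signedWord_negSuf]; exact if_pos (by omega)
      rw [v1, v2, v3]
      have hab : signedWord n π (i - 1 - 1) ≠ signedWord n π (i - 1) :=
        signedWord_ne n π (by omega) (by omega) (by omega)
      have habs : |signedWord n π (i - 1)| ≠ |signedWord n π i| :=
        abs_signedWord_ne n π (by omega) (by omega) (by omega) (by omega) (by omega)
      by_cases hc : |signedWord n π (i - 1)| < |signedWord n π i|
      · have hcp : cpos n i π = i - 1 := by unfold cpos; exact if_pos hc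
        rw [xorI hcp.symm]
        exact helper1 _ _ _ hab hc
      · have hcp : cpos n i π = i := by unfold cpos; exact if_neg hc
        rw [xorN (show i - 1 ≠ cpos n i π by omega)]
        exact helper2 _ _ _ (by omega)
    · by_cases hC : j = i
      · obtain rfl : i = j := hC.symm
        have v1 : signedWord n (negSuf n i π) (i - 1) = signedWord n π (i - 1) := by
          rw [signedWord_negSuf]; exact if_neg (by omega)
        have v2 : signedWord n (negSuf n i π) i = -signedWord n π i := by
          rw [signedWord_negSuf]; exact if_pos (by omega)
        have v3 : signedWord n (negSuf n i π) (i + 1) = -signedWord n π (i + 1) := by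
          rw [signedWord_negSuf]; exact if_pos (by omega)
        rw [v1, v2, v3]
        have hbd : signedWord n π i ≠ signedWord n π (i + 1) :=
          signedWord_ne n π (by omega) (by omega) (by omega)
        have habs : |signedWord n π (i - 1)| ≠ |signedWord n π i| :=
          abs_signedWord_ne n π (by omega) (by omega) (by omega) (by omega) (by omega)
        by_cases hc : |signedWord n π (i - 1)| < |signedWord n π i|
        · have hcp : cpos n i π = i - 1 := by unfold cpos; exact if_pos hc
          rw [xorN (show i ≠ cpos n i π by omega)]
          exact helper4 _ _ _ hc
        · have hcp : cpos n i π = i := by unfold cpos; exact if_neg hc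
          rw [xorI hcp.symm]
          exact helper3 _ _ _ hbd (by omega)
      · -- j ≥ i + 1
        have hD : i + 1 ≤ j := by omega
        have v1 : signedWord n (negSuf n i π) (j - 1) = -signedWord n π (j - 1) := by
          rw [signedWord_negSuf]; exact if_pos (by omega)
        have v2 : signedWord n (negSuf n i π) j = -signedWord n π j := by
          rw [signedWord_negSuf]; exact if_pos (by omega)
        have v3 : signedWord n (negSuf n i π) (j + 1) = -signedWord n π (j + 1) := by
          rw [signedWord_negSuf]; exact if_pos (by omega)
        rw [v1, v2, v3, xorN (show j ≠ cpos n i π by omega)]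
        constructor
        · intro h; omega
        · intro h; omega

/-! #### The action of sets of generators -/

/-- Generator positions. -/
def gen (n k : ℕ) : ℕ := n - 1 - 2 * k

def maskBit (n : ℕ) (S : Finset (Fin ((n - 1) / 2))) (p : ℕ) : Bool :=
  decide (Odd (S.filter fun k => gen n k.val ≤ p).card)

/-- The action of a set of generators: XOR the corresponding suffix-negations. -/
def actS (n : ℕ) (S : Finset (Fin ((n - 1) / 2))) (π : SignedPerm n) : SignedPerm n :=
  (π.1, fun p => xor (π.2 p) (maskBit n S ((p : ℕ) + 1)))

lemma fst_actS (n : ℕ) (S : Finset (Fin ((n - 1) / 2))) (π : SignedPerm n) :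
    (actS n S π).1 = π.1 := rfl

lemma actS_empty (n : ℕ) (π : SignedPerm n) : actS n ∅ π = π := by
  refine Prod.ext rfl (funext fun p => ?_)
  show xor (π.2 p) (maskBit n ∅ ((p : ℕ) + 1)) = π.2 p
  unfold maskBit
  simp [Nat.odd_iff]

lemma actS_insert (n : ℕ) (k : Fin ((n - 1) / 2)) (S : Finset (Fin ((n - 1) / 2)))
    (hk : k ∉ S) (π : SignedPerm n) :
    actS n (insert k S) π = negSuf n (gen n k.val) (actS n S π) := by
  refine Prod.ext rfl (funext fun p => ?_)
  show xor (π.2 p) (maskBit n (insert k S) ((p : ℕ) + 1)) =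
    if gen n k.val ≤ (p : ℕ) + 1 then !(xor (π.2 p) (maskBit n S ((p : ℕ) + 1)))
      else xor (π.2 p) (maskBit n S ((p : ℕ) + 1))
  unfold maskBit
  by_cases h : gen n k.val ≤ (p : ℕ) + 1
  · rw [if_pos h, Finset.filter_insert, if_pos h,
      Finset.card_insert_of_notMem (fun hm => hk (Finset.mem_of_mem_filter k hm))]
    have hd : decide (Odd ((S.filter fun k' => gen n k'.val ≤ (p : ℕ) + 1).card + 1)) =
        ! decide (Odd ((S.filter fun k' => gen n k'.val ≤ (p : ℕ) + 1).card)) := by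
      rcases Nat.even_or_odd ((S.filter fun k' => gen n k'.val ≤ (p : ℕ) + 1).card) with he | ho
      · rw [decide_eq_true (Nat.odd_add_one.mpr (Nat.not_odd_iff_even.mpr he)),
          decide_eq_false (Nat.not_odd_iff_even.mpr he)]
        rfl
      · rw [decide_eq_true ho,
          decide_eq_false (fun hx => (Nat.odd_add_one.mp hx) ho)]
        rfl
    rw [hd]
    generalize (π.2 p) = x
    generalize decide (Odd ((S.filter fun k' => gen n k'.val ≤ (p : ℕ) + 1).card)) = y
    cases x <;> cases y <;> rfl
  · rw [if_neg h, Finset.filter_insert, if_neg h]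

lemma actS_actS (n : ℕ) (S : Finset (Fin ((n - 1) / 2))) (π : SignedPerm n) :
    actS n S (actS n S π) = π := by
  refine Prod.ext rfl (funext fun p => ?_)
  show xor (xor (π.2 p) (maskBit n S ((p : ℕ) + 1))) (maskBit n S ((p : ℕ) + 1)) = π.2 p
  generalize (π.2 p) = x
  generalize maskBit n S ((p : ℕ) + 1) = y
  cases x <;> cases y <;> rfl

lemma cpos_actS (n i : ℕ) (S : Finset (Fin ((n - 1) / 2))) (π : SignedPerm n) :
    cpos n i (actS n S π) = cpos n i π :=
  cpos_eq_of_fst n i _ π rfl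

lemma gen_bounds (n : ℕ) (k : Fin ((n - 1) / 2)) : 2 ≤ gen n k.val ∧ gen n k.val + 1 ≤ n := by
  have := k.2
  unfold gen
  omega

lemma cpos_inj (n : ℕ) (π : SignedPerm n) {k k' : Fin ((n - 1) / 2)}
    (h : cpos n (gen n k.val) π = cpos n (gen n k'.val) π) : k = k' := by
  have h1 := cpos_range n (gen n k.val) π
  have h2 := cpos_range n (gen n k'.val) π
  have hk := k.2
  have hk' := k'.2
  refine Fin.ext ?_
  unfold gen at *
  omega

lemma changes_actS (n : ℕ) (S : Finset (Fin ((n - 1) / 2))) (π : SignedPerm n)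
    (j : ℕ) (hj1 : 1 ≤ j) (hjn : j ≤ n - 1) :
    (changesDir (signedWord n (actS n S π)) j ↔
      Xor' (∃ k ∈ S, cpos n (gen n k.val) π = j) (changesDir (signedWord n π) j)) := by
  classical
  induction S using Finset.induction_on with
  | empty =>
    rw [actS_empty]
    simp [Xor']
  | insert k S hk ih =>
    rw [actS_insert n k S hk]
    have hg := gen_bounds n k
    rw [changes_negSuf n (gen n k.val) (actS n S π) hg.1 hg.2 j hj1 hjn, cpos_actS, ih]
    have hdisj : ¬ ((j = cpos n (gen n k.val) π) ∧ ∃ k' ∈ S, cpos n (gen n k'.val) π = j) := by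
      rintro ⟨rfl, k', hk', hc⟩
      have := cpos_inj n π hc
      subst this
      exact hk hk'
    have hsplit : (∃ k' ∈ insert k S, cpos n (gen n k'.val) π = j) ↔
        ((j = cpos n (gen n k.val) π) ∨ ∃ k' ∈ S, cpos n (gen n k'.val) π = j) := by
      simp only [Finset.mem_insert]
      constructor
      · rintro ⟨k', hk', hc⟩
        rcases hk' with rfl | hk'
        · exact Or.inl hc.symm
        · exact Or.inr ⟨k', hk', hc⟩
      · rintro (hc | ⟨k', hk', hc⟩)
        · exact ⟨k, Or.inl rfl, hc.symm⟩
        · exact ⟨k', Or.inr hk', hc⟩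
    rw [hsplit]
    exact xor_assoc_or hdisj

/-! #### The transversal and the orbit sum -/

/-- The transversal condition: all toggled indicators are off. -/
def isTrans (n : ℕ) (π : SignedPerm n) : Prop :=
  ∀ k : Fin ((n - 1) / 2), ¬ changesDir (signedWord n π) (cpos n (gen n k.val) π)

lemma cpos_gen_mem (n : ℕ) (k : Fin ((n - 1) / 2)) (π : SignedPerm n) :
    1 ≤ cpos n (gen n k.val) π ∧ cpos n (gen n k.val) π ≤ n - 1 := by
  have h1 := cpos_range n (gen n k.val) π
  have hg := gen_bounds n k
  omega

lemma runB_actS (n : ℕ) (π : SignedPerm n) (hT : isTrans n π)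
    (S : Finset (Fin ((n - 1) / 2))) :
    runB n (actS n S π) = runB n π + S.card := by
  classical
  unfold runB
  have key : (Finset.Icc 1 (n-1)).filter (changesDir (signedWord n (actS n S π))) =
      (Finset.Icc 1 (n-1)).filter (changesDir (signedWord n π)) ∪
        S.image (fun k => cpos n (gen n k.val) π) := by
    ext j
    simp only [Finset.mem_filter, Finset.mem_union, Finset.mem_image, Finset.mem_Icc]
    constructor
    · rintro ⟨hj, hch⟩
      rw [changes_actS n S π j hj.1 hj.2] at hch
      rcases hch with ⟨⟨k, hk, hc⟩, _⟩ | ⟨hch, _⟩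
      · exact Or.inr ⟨k, hk, hc⟩
      · exact Or.inl ⟨hj, hch⟩
    · rintro (⟨hj, hch⟩ | ⟨k, hk, hc⟩)
      · refine ⟨hj, ?_⟩
        rw [changes_actS n S π j hj.1 hj.2]
        refine Or.inr ⟨hch, ?_⟩
        rintro ⟨k, hk, hc⟩
        subst hc
        exact hT k hch
      · subst hc
        have hmem := cpos_gen_mem n k π
        refine ⟨⟨hmem.1, hmem.2⟩, ?_⟩
        rw [changes_actS n S π _ hmem.1 hmem.2]
        exact Or.inl ⟨⟨k, hk, rfl⟩, hT k⟩
  have hdisj : Disjoint ((Finset.Icc 1 (n-1)).filter (changesDir (signedWord n π)))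
      (S.image (fun k => cpos n (gen n k.val) π)) := by
    rw [Finset.disjoint_right]
    rintro j hj hj'
    rw [Finset.mem_image] at hj
    obtain ⟨k, hk, hc⟩ := hj
    subst hc
    exact hT k (Finset.mem_filter.mp hj').2
  have hinj : Set.InjOn (fun k : Fin ((n - 1) / 2) => cpos n (gen n k.val) π) ↑S :=
    fun a _ b _ h => cpos_inj n π h
  rw [key, Finset.card_union_of_disjoint hdisj, Finset.card_image_of_injOn hinj]
  omega

/-- The selection of "on" indicators. -/
def sel (n : ℕ) (π : SignedPerm n) : Finset (Fin ((n - 1) / 2)) :=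
  Finset.univ.filter fun k => changesDir (signedWord n π) (cpos n (gen n k.val) π)

lemma isTrans_actS_sel (n : ℕ) (π : SignedPerm n) : isTrans n (actS n (sel n π) π) := by
  intro k
  have hmem := cpos_gen_mem n k π
  rw [cpos_actS, changes_actS n _ π _ hmem.1 hmem.2]
  rintro (⟨⟨k', hk', hc⟩, hn2⟩ | ⟨hc, hn2⟩)
  · have := cpos_inj n π hc
    subst this
    exact hn2 (Finset.mem_filter.mp hk').2
  · exact hn2 ⟨k, Finset.mem_filter.mpr ⟨Finset.mem_univ k, hc⟩, rfl⟩

lemma sel_actS (n : ℕ) (π : SignedPerm n) (hT : isTrans n π)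
    (S : Finset (Fin ((n - 1) / 2))) : sel n (actS n S π) = S := by
  ext k
  have hmem := cpos_gen_mem n k π
  simp only [sel, Finset.mem_filter, Finset.mem_univ, true_and]
  rw [cpos_actS, changes_actS n S π _ hmem.1 hmem.2]
  constructor
  · rintro (⟨⟨k', hk', hc⟩, _⟩ | ⟨hc, _⟩)
    · have := cpos_inj n π hc; subst this; exact hk'
    · exact absurd hc (hT k)
  · intro hk
    exact Or.inl ⟨⟨k, hk, rfl⟩, hT k⟩

lemma sum_pow_card (m : ℕ) :
    ∑ S ∈ (Finset.univ : Finset (Finset (Fin m))), (X : Polynomial ℤ) ^ S.card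
      = (1 + X) ^ m := by
  classical
  have h := Finset.prod_add (fun _ : Fin m => (X : Polynomial ℤ)) (fun _ => (1 : Polynomial ℤ))
    Finset.univ
  rw [Finset.prod_const, Finset.card_univ, Fintype.card_fin] at h
  rw [Finset.powerset_univ] at h
  have h2 : ∀ t : Finset (Fin m), ((∏ _i ∈ t, (X : Polynomial ℤ)) *
      ∏ _i ∈ Finset.univ \ t, (1 : Polynomial ℤ)) = X ^ t.card := by
    intro t
    rw [Finset.prod_const, Finset.prod_const_one, mul_one]
  rw [Finset.sum_congr rfl (fun t _ => h2 t)] at h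
  rw [add_comm 1 (X : Polynomial ℤ)]
  exact h.symm

/-- Master divisibility lemma. -/
lemma main_dvd (n : ℕ) (cond : SignedPerm n → Prop) [DecidablePred cond]
    (hcond : ∀ S π, cond (actS n S π) ↔ cond π) :
    (1 + X : Polynomial ℤ) ^ ((n - 1) / 2) ∣
      ∑ π : SignedPerm n, if cond π then X ^ runB n π else 0 := by
  classical
  set T : Finset (SignedPerm n) := Finset.univ.filter (isTrans n) with hTdef
  have hsum : ∑ q ∈ T ×ˢ (Finset.univ : Finset (Finset (Fin ((n - 1) / 2)))),
        (if cond q.1 then (X : Polynomial ℤ) ^ runB n q.1 * X ^ q.2.card else 0)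
      = ∑ π : SignedPerm n, if cond π then X ^ runB n π else 0 := by
    apply Finset.sum_nbij' (i := fun q => actS n q.2 q.1)
      (j := fun π => (actS n (sel n π) π, sel n π))
    · intro q _; exact Finset.mem_univ _
    · intro π _
      rw [Finset.mem_product]
      exact ⟨Finset.mem_filter.mpr ⟨Finset.mem_univ _, isTrans_actS_sel n π⟩, Finset.mem_univ _⟩
    · rintro ⟨π, S⟩ hq
      rw [Finset.mem_product, hTdef, Finset.mem_filter] at hq
      have hT := hq.1.2
      have h1 : sel n (actS n S π) = S := sel_actS n π hT S
      simp only [h1, actS_actS]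
    · intro π _
      simp only [actS_actS]
    · rintro ⟨π, S⟩ hq
      rw [Finset.mem_product, hTdef, Finset.mem_filter] at hq
      have hT := hq.1.2
      simp only
      have e1 : runB n (actS n S π) = runB n π + S.card := runB_actS n π hT S
      rw [e1, pow_add]
      exact (if_congr (hcond S π) rfl rfl).symm
  have hinner : ∀ π ∈ T, ∑ S ∈ (Finset.univ : Finset (Finset (Fin ((n - 1) / 2)))),
      (if cond π then (X : Polynomial ℤ) ^ runB n π * X ^ S.card else 0)
      = (if cond π then (X : Polynomial ℤ) ^ runB n π else 0) * (1 + X) ^ ((n - 1) / 2) := by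
    intro π _
    by_cases hc : cond π
    · rw [Finset.sum_congr rfl (fun S (_ : S ∈ Finset.univ) => if_pos hc),
        ← Finset.mul_sum, sum_pow_card, if_pos hc]
    · rw [Finset.sum_congr rfl (fun S (_ : S ∈ Finset.univ) => if_neg hc),
        Finset.sum_const, smul_zero, if_neg hc, zero_mul]
  have h2 : ∑ q ∈ T ×ˢ (Finset.univ : Finset (Finset (Fin ((n - 1) / 2)))),
        (if cond q.1 then (X : Polynomial ℤ) ^ runB n q.1 * X ^ q.2.card else 0)
      = (∑ π ∈ T, if cond π then (X : Polynomial ℤ) ^ runB n π else 0) * (1 + X) ^ ((n - 1) / 2) := by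
    rw [Finset.sum_product, Finset.sum_congr rfl hinner, ← Finset.sum_mul]
  rw [← hsum, h2]
  exact Dvd.intro_left _ rfl

/-! #### Invariance of the side conditions -/

lemma snd_actS_of_lt (n : ℕ) (S : Finset (Fin ((n - 1) / 2))) (π : SignedPerm n)
    (p : Fin n) (hp : (p : ℕ) + 1 < 2) : (actS n S π).2 p = π.2 p := by
  show xor (π.2 p) (maskBit n S ((p : ℕ) + 1)) = π.2 p
  have he : (S.filter fun k => gen n k.val ≤ (p : ℕ) + 1) = ∅ :=
    Finset.filter_eq_empty_iff.mpr (fun k _ => by have := gen_bounds n k; omega)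
  unfold maskBit
  rw [he]
  simp [Nat.odd_iff]

lemma signedWord_actS_one (n : ℕ) (hn : 1 ≤ n) (S : Finset (Fin ((n - 1) / 2)))
    (π : SignedPerm n) : signedWord n (actS n S π) 1 = signedWord n π 1 := by
  simp only [signedWord, dif_pos (show 1 ≤ 1 ∧ 1 ≤ n from ⟨le_refl 1, hn⟩)]
  rw [show (actS n S π).2 ⟨1 - 1, by omega⟩ = π.2 ⟨1 - 1, by omega⟩ from
    snd_actS_of_lt n S π _ (by simp)]
  rfl

lemma card_filter_ge (n i : ℕ) (hi : 1 ≤ i) :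
    (Finset.univ.filter fun p : Fin n => i ≤ (p : ℕ) + 1).card = n + 1 - i ∨
      (n + 1 - i = 0 ∧ (Finset.univ.filter fun p : Fin n => i ≤ (p : ℕ) + 1).card = 0) := by
  classical
  by_cases hin : i ≤ n + 1
  · left
    have h1 : ((Finset.univ.filter fun p : Fin n => i ≤ (p : ℕ) + 1).map Fin.valEmbedding)
        = Finset.Ico (i - 1) n := by
      ext x
      simp only [Finset.mem_map, Finset.mem_filter, Finset.mem_univ, true_and,
        Finset.mem_Ico, Fin.valEmbedding_apply]
      constructor
      · rintro ⟨a, ha, rfl⟩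
        exact ⟨by omega, a.2⟩
      · rintro ⟨hx1, hx2⟩
        exact ⟨⟨x, hx2⟩, by simpa using (by omega : i ≤ x + 1), rfl⟩
    have h2 := congrArg Finset.card h1
    rw [Finset.card_map, Nat.card_Ico] at h2
    rw [h2]
    omega
  · right
    constructor
    · omega
    · rw [Finset.card_eq_zero]
      refine Finset.filter_eq_empty_iff.mpr (fun p _ => ?_)
      have := p.2
      omega

lemma negCount_parity_negSuf (n i : ℕ) (π : SignedPerm n) (hi1 : 1 ≤ i) (hin : i ≤ n)
    (heven : Even (n + 1 - i)) :
    (Even (negCount n (negSuf n i π)) ↔ Even (negCount n π)) := by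
  classical
  have hsum : negCount n (negSuf n i π) + negCount n π =
      ∑ p : Fin n, ((if (negSuf n i π).2 p = true then 1 else 0) +
        (if π.2 p = true then 1 else 0)) := by
    unfold negCount
    rw [Finset.card_filter, Finset.card_filter, ← Finset.sum_add_distrib]
  have hterm : ∀ p : Fin n, ((if (negSuf n i π).2 p = true then 1 else 0) +
        (if π.2 p = true then 1 else 0)) =
      if i ≤ (p : ℕ) + 1 then 1 else 2 * (if π.2 p = true then 1 else 0) := by
    intro p
    show ((if (if i ≤ (p : ℕ) + 1 then !(π.2 p) else π.2 p) = true then 1 else 0) + _) = _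
    by_cases h : i ≤ (p : ℕ) + 1
    · rw [if_pos h, if_pos h]
      cases π.2 p <;> simp
    · rw [if_neg h, if_neg h]
      cases π.2 p <;> simp
  rw [Finset.sum_congr rfl (fun p _ => hterm p)] at hsum
  rw [Finset.sum_ite, Finset.sum_const, smul_eq_mul, mul_one, ← Finset.mul_sum] at hsum
  have hcard := card_filter_ge n i hi1
  have heven2 : Even (negCount n (negSuf n i π) + negCount n π) := by
    rw [hsum]
    rcases hcard with hc | ⟨hc0, hc⟩
    · rw [hc]
      exact Even.add heven (even_two_mul _)
    · rw [hc]
      simpa using even_two_mul _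
  exact Nat.even_add.mp heven2

lemma negCount_parity_actS (n : ℕ) (S : Finset (Fin ((n - 1) / 2))) (π : SignedPerm n) :
    Even (negCount n (actS n S π)) ↔ Even (negCount n π) := by
  classical
  induction S using Finset.induction_on with
  | empty => rw [actS_empty]
  | insert k S hk ih =>
    rw [actS_insert n k S hk]
    have hg := gen_bounds n k
    have hkv := k.2
    have heven : Even (n + 1 - gen n k.val) := by
      refine ⟨k.val + 1, ?_⟩
      unfold gen at *
      omega
    rw [negCount_parity_negSuf n _ _ (by omega) (by omega) heven, ih]

end S11

/-- For `n ≥ 1`, `(1+x)^{⌊(n−1)/2⌋}` divides each of the six polynomials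
`R_n^{B,>}`, `R_n^{B,<}`, `R_n^B`, `R_n^{D,>}`, `R_n^{D,<}`, `R_n^D` in `ℤ[x]`. -/
theorem statement11 (n : ℕ) (hn : 1 ≤ n) :
    (1 + X) ^ ((n - 1) / 2) ∣ runPolyBgt n ∧
    (1 + X) ^ ((n - 1) / 2) ∣ runPolyBlt n ∧
    (1 + X) ^ ((n - 1) / 2) ∣ runPolyB n ∧
    (1 + X) ^ ((n - 1) / 2) ∣ runPolyDgt n ∧
    (1 + X) ^ ((n - 1) / 2) ∣ runPolyDlt n ∧
    (1 + X) ^ ((n - 1) / 2) ∣ runPolyD n := by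
  classical
  have hmain : ∀ (cond : SignedPerm n → Prop) (_ : DecidablePred cond),
      (∀ S π, cond (S11.actS n S π) ↔ cond π) →
      (1 + X : Polynomial ℤ) ^ ((n - 1) / 2) ∣
        ∑ π : SignedPerm n, if cond π then X ^ runB n π else 0 := by
    intro cond hdec hcond
    exact S11.main_dvd n cond hcond
  have hone : ∀ (S : Finset (Fin ((n-1)/2))) (π : SignedPerm n),
      signedWord n (S11.actS n S π) 1 = signedWord n π 1 :=
    fun S π => S11.signedWord_actS_one n hn S π
  have hpar : ∀ (S : Finset (Fin ((n-1)/2))) (π : SignedPerm n),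
      (Even (negCount n (S11.actS n S π)) ↔ Even (negCount n π)) :=
    fun S π => S11.negCount_parity_actS n S π
  refine ⟨?_, ?_, ?_, ?_, ?_, ?_⟩
  · unfold runPolyBgt
    exact hmain _ inferInstance (fun S π => by rw [hone S π])
  · unfold runPolyBlt
    exact hmain _ inferInstance (fun S π => by rw [hone S π])
  · unfold runPolyB
    have := hmain (fun _ => True) inferInstance (fun _ _ => Iff.rfl)
    simpa using this
  · unfold runPolyDgt
    exact hmain _ inferInstance (fun S π => by rw [hone S π, hpar S π])
  · unfold runPolyDlt
    exact hmain _ inferInstance (fun S π => by rw [hone S π, hpar S π])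
  · unfold runPolyD
    exact hmain _ inferInstance (fun S π => by rw [hpar S π])
end
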